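/- arXiv:2109.09469 — 5 statements merged into one kernel-verified Lean document; each statement's English description precedes it below -/
import Mathlib

section
/- Energy dissipation identity: If (V,P) is a classical solution of the damped piezoelectric system on [0,L]×[0,T], then the energy E is differentiable on [0,T] and for every t ∈ [0,T], E′(t) = −ξ₁·V_t(L,t)² − ξ₂·P_t(L,t)². -/
/-- Partial derivative in time of a function `V : ℝ → ℝ → ℝ` (first argument: space,
second argument: time). -/
noncomputable def partialT (V : ℝ → ℝ → ℝ) (x t : ℝ) : ℝ := deriv (fun s => V x s) t

/-- Second partial derivative in time. -/
noncomputable def partialTT (V : ℝ → ℝ → ℝ) (x t : ℝ) : ℝ := deriv (fun s => partialT V x s) t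

/-- Partial derivative in space. -/
noncomputable def partialX (V : ℝ → ℝ → ℝ) (x t : ℝ) : ℝ := deriv (fun y => V y t) x

/-- Second partial derivative in space. -/
noncomputable def partialXX (V : ℝ → ℝ → ℝ) (x t : ℝ) : ℝ := deriv (fun y => partialX V y t) x

/-- The energy of the piezoelectric beam system with tip body. -/
noncomputable def energy (ρ μ β m₁ m₂ α₁ γ L : ℝ) (V P : ℝ → ℝ → ℝ) (t : ℝ) : ℝ :=
  (1 / 2) * (∫ x in (0:ℝ)..L,
      (ρ * partialT V x t ^ 2 + α₁ * partialX V x t ^ 2 + μ * partialT P x t ^ 2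
        + β * (γ * partialX V x t - partialX P x t) ^ 2))
    + (m₁ / 2) * partialT V L t ^ 2 + (m₂ / 2) * partialT P L t ^ 2


noncomputable def pT (f : ℝ × ℝ → ℝ) (p : ℝ × ℝ) : ℝ := fderiv ℝ f p (0, 1)
noncomputable def pX (f : ℝ × ℝ → ℝ) (p : ℝ × ℝ) : ℝ := fderiv ℝ f p (1, 0)

lemma hasDerivAt_pT {f : ℝ × ℝ → ℝ} {x t : ℝ} (hf : DifferentiableAt ℝ f (x, t)) :
    HasDerivAt (fun s => f (x, s)) (pT f (x, t)) t := by
  have h := hf.hasFDerivAt.comp_hasDerivAt t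
    (HasDerivAt.prodMk (hasDerivAt_const t x) (hasDerivAt_id t))
  exact h

lemma hasDerivAt_pX {f : ℝ × ℝ → ℝ} {x t : ℝ} (hf : DifferentiableAt ℝ f (x, t)) :
    HasDerivAt (fun y => f (y, t)) (pX f (x, t)) x := by
  have h := hf.hasFDerivAt.comp_hasDerivAt x
    (HasDerivAt.prodMk (hasDerivAt_id x) (hasDerivAt_const x t))
  exact h

lemma contDiff_pT {f : ℝ × ℝ → ℝ} (hf : ContDiff ℝ 2 f) : ContDiff ℝ 1 (pT f) :=
  (hf.fderiv_right (by norm_num)).clm_apply contDiff_const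

lemma contDiff_pX {f : ℝ × ℝ → ℝ} (hf : ContDiff ℝ 2 f) : ContDiff ℝ 1 (pX f) :=
  (hf.fderiv_right (by norm_num)).clm_apply contDiff_const

lemma continuous_pT_of_one {f : ℝ × ℝ → ℝ} (hf : ContDiff ℝ 1 f) : Continuous (pT f) :=
  (((hf.fderiv_right (m := 0) (by norm_num)).clm_apply contDiff_const)).continuous

lemma continuous_pX_of_one {f : ℝ × ℝ → ℝ} (hf : ContDiff ℝ 1 f) : Continuous (pX f) :=
  (((hf.fderiv_right (m := 0) (by norm_num)).clm_apply contDiff_const)).continuous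

lemma clairaut {f : ℝ × ℝ → ℝ} (hf : ContDiff ℝ 2 f) (p : ℝ × ℝ) :
    pX (pT f) p = pT (pX f) p := by
  have hd : Differentiable ℝ f := hf.differentiable two_ne_zero
  have h2 : DifferentiableAt ℝ (fderiv ℝ f) p :=
    ((hf.fderiv_right (by norm_num)).differentiable one_ne_zero).differentiableAt
  have hT : HasFDerivAt (pT f)
      (((ContinuousLinearMap.apply ℝ ℝ ((0:ℝ), (1:ℝ))).comp (fderiv ℝ (fderiv ℝ f) p))) p :=
    (ContinuousLinearMap.apply ℝ ℝ ((0:ℝ), (1:ℝ))).hasFDerivAt.comp p h2.hasFDerivAt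
  have hX : HasFDerivAt (pX f)
      (((ContinuousLinearMap.apply ℝ ℝ ((1:ℝ), (0:ℝ))).comp (fderiv ℝ (fderiv ℝ f) p))) p :=
    (ContinuousLinearMap.apply ℝ ℝ ((1:ℝ), (0:ℝ))).hasFDerivAt.comp p h2.hasFDerivAt
  have e1 : pX (pT f) p = fderiv ℝ (fderiv ℝ f) p (1, 0) (0, 1) := by
    simp only [pX, hT.fderiv]; rfl
  have e2 : pT (pX f) p = fderiv ℝ (fderiv ℝ f) p (0, 1) (1, 0) := by
    simp only [pT, hX.fderiv]; rfl
  rw [e1, e2]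
  exact second_derivative_symmetric (fun y => (hd y).hasFDerivAt) h2.hasFDerivAt _ _

noncomputable def Phi (ρ μ β α₁ γ : ℝ) (f g : ℝ × ℝ → ℝ) (p : ℝ × ℝ) : ℝ :=
  ρ * pT f p ^ 2 + α₁ * pX f p ^ 2 + μ * pT g p ^ 2 + β * (γ * pX f p - pX g p) ^ 2

noncomputable def Psi (ρ μ β α₁ γ : ℝ) (f g : ℝ × ℝ → ℝ) (p : ℝ × ℝ) : ℝ :=
  2 * (ρ * pT f p * pT (pT f) p + α₁ * pX f p * pT (pX f) p + μ * pT g p * pT (pT g) p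
    + β * (γ * pX f p - pX g p) * (γ * pT (pX f) p - pT (pX g) p))

noncomputable def Gb (β γ α : ℝ) (f g : ℝ × ℝ → ℝ) (p : ℝ × ℝ) : ℝ :=
  α * (pT f p * pX f p) - γ * β * (pT f p * pX g p) + β * (pT g p * pX g p)
    - γ * β * (pT g p * pX f p)

lemma continuous_Phi (ρ μ β α₁ γ : ℝ) {f g : ℝ × ℝ → ℝ}
    (hf : ContDiff ℝ 2 f) (hg : ContDiff ℝ 2 g) : Continuous (Phi ρ μ β α₁ γ f g) := by
  have h1 := (contDiff_pT hf).continuous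
  have h2 := (contDiff_pX hf).continuous
  have h3 := (contDiff_pT hg).continuous
  have h4 := (contDiff_pX hg).continuous
  unfold Phi; fun_prop

lemma continuous_Psi (ρ μ β α₁ γ : ℝ) {f g : ℝ × ℝ → ℝ}
    (hf : ContDiff ℝ 2 f) (hg : ContDiff ℝ 2 g) : Continuous (Psi ρ μ β α₁ γ f g) := by
  have h1 := (contDiff_pT hf).continuous
  have h2 := (contDiff_pX hf).continuous
  have h3 := (contDiff_pT hg).continuous
  have h4 := (contDiff_pX hg).continuous
  have h5 := continuous_pT_of_one (contDiff_pT hf)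
  have h6 := continuous_pT_of_one (contDiff_pX hf)
  have h7 := continuous_pT_of_one (contDiff_pT hg)
  have h8 := continuous_pT_of_one (contDiff_pX hg)
  unfold Psi; fun_prop

lemma hasDerivAt_Phi (ρ μ β α₁ γ : ℝ) {f g : ℝ × ℝ → ℝ}
    (hf : ContDiff ℝ 2 f) (hg : ContDiff ℝ 2 g) (x t : ℝ) :
    HasDerivAt (fun s => Phi ρ μ β α₁ γ f g (x, s)) (Psi ρ μ β α₁ γ f g (x, t)) t := by
  have h1 : HasDerivAt (fun s => pT f (x, s)) (pT (pT f) (x, t)) t :=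
    hasDerivAt_pT ((contDiff_pT hf).differentiable one_ne_zero (x, t))
  have h2 : HasDerivAt (fun s => pX f (x, s)) (pT (pX f) (x, t)) t :=
    hasDerivAt_pT ((contDiff_pX hf).differentiable one_ne_zero (x, t))
  have h3 : HasDerivAt (fun s => pT g (x, s)) (pT (pT g) (x, t)) t :=
    hasDerivAt_pT ((contDiff_pT hg).differentiable one_ne_zero (x, t))
  have h4 : HasDerivAt (fun s => pX g (x, s)) (pT (pX g) (x, t)) t :=
    hasDerivAt_pT ((contDiff_pX hg).differentiable one_ne_zero (x, t))
  have H := ((((h1.pow 2).const_mul ρ).add ((h2.pow 2).const_mul α₁)).add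
      ((h3.pow 2).const_mul μ)).add ((((h2.const_mul γ).sub h4).pow 2).const_mul β)
  exact H.congr_deriv (by simp only [Psi, Pi.sub_apply]; push_cast; ring)

lemma hasDerivAt_Gb (β γ α : ℝ) {f g : ℝ × ℝ → ℝ}
    (hf : ContDiff ℝ 2 f) (hg : ContDiff ℝ 2 g) (x t : ℝ) :
    HasDerivAt (fun y => Gb β γ α f g (y, t))
      (α * (pX (pT f) (x, t) * pX f (x, t) + pT f (x, t) * pX (pX f) (x, t))
        - γ * β * (pX (pT f) (x, t) * pX g (x, t) + pT f (x, t) * pX (pX g) (x, t))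
        + β * (pX (pT g) (x, t) * pX g (x, t) + pT g (x, t) * pX (pX g) (x, t))
        - γ * β * (pX (pT g) (x, t) * pX f (x, t) + pT g (x, t) * pX (pX f) (x, t))) x := by
  have h1 : HasDerivAt (fun y => pT f (y, t)) (pX (pT f) (x, t)) x :=
    hasDerivAt_pX ((contDiff_pT hf).differentiable one_ne_zero (x, t))
  have h2 : HasDerivAt (fun y => pX f (y, t)) (pX (pX f) (x, t)) x :=
    hasDerivAt_pX ((contDiff_pX hf).differentiable one_ne_zero (x, t))
  have h3 : HasDerivAt (fun y => pT g (y, t)) (pX (pT g) (x, t)) x :=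
    hasDerivAt_pX ((contDiff_pT hg).differentiable one_ne_zero (x, t))
  have h4 : HasDerivAt (fun y => pX g (y, t)) (pX (pX g) (x, t)) x :=
    hasDerivAt_pX ((contDiff_pX hg).differentiable one_ne_zero (x, t))
  have H := ((((h1.mul h2).const_mul α).sub ((h1.mul h4).const_mul (γ * β))).add
      ((h3.mul h4).const_mul β)).sub ((h3.mul h2).const_mul (γ * β))
  exact H

/-- Energy dissipation identity -/
theorem energy_dissipation_identity
    (ρ μ β m₁ m₂ ξ₁ ξ₂ L T γ α₁ α : ℝ)
    (hρ : 0 < ρ) (hμ : 0 < μ) (hβ : 0 < β) (hm₁ : 0 < m₁) (hm₂ : 0 < m₂)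
    (hξ₁ : 0 < ξ₁) (hξ₂ : 0 < ξ₂) (hL : 0 < L) (hT : 0 < T) (hα₁ : 0 < α₁)
    (hα : α = α₁ + γ ^ 2 * β)
    (V P : ℝ → ℝ → ℝ)
    (hV : ContDiff ℝ 2 (fun p : ℝ × ℝ => V p.1 p.2))
    (hP : ContDiff ℝ 2 (fun p : ℝ × ℝ => P p.1 p.2))
    (heq1 : ∀ x ∈ Set.Icc (0:ℝ) L, ∀ t ∈ Set.Icc (0:ℝ) T,
      ρ * partialTT V x t - α * partialXX V x t + γ * β * partialXX P x t = 0)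
    (heq2 : ∀ x ∈ Set.Icc (0:ℝ) L, ∀ t ∈ Set.Icc (0:ℝ) T,
      μ * partialTT P x t - β * partialXX P x t + γ * β * partialXX V x t = 0)
    (hbc0 : ∀ t ∈ Set.Icc (0:ℝ) T, V 0 t = 0 ∧ P 0 t = 0)
    (hbcV : ∀ t ∈ Set.Icc (0:ℝ) T,
      α * partialX V L t - γ * β * partialX P L t + ξ₁ * partialT V L t
        + m₁ * partialTT V L t = 0)
    (hbcP : ∀ t ∈ Set.Icc (0:ℝ) T,
      β * partialX P L t - γ * β * partialX V L t + ξ₂ * partialT P L t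
        + m₂ * partialTT P L t = 0) :
    ∀ t ∈ Set.Icc (0:ℝ) T,
      HasDerivAt (energy ρ μ β m₁ m₂ α₁ γ L V P)
        (-(ξ₁ * partialT V L t ^ 2) - ξ₂ * partialT P L t ^ 2) t := by
  intro t₀ ht₀
  set f : ℝ × ℝ → ℝ := fun p => V p.1 p.2 with hf_def
  set g : ℝ × ℝ → ℝ := fun p => P p.1 p.2 with hg_def
  have hVd : Differentiable ℝ f := hV.differentiable two_ne_zero
  have hPd : Differentiable ℝ g := hP.differentiable two_ne_zero
  have hVt1 : ContDiff ℝ 1 (pT f) := contDiff_pT hV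
  have hVx1 : ContDiff ℝ 1 (pX f) := contDiff_pX hV
  have hPt1 : ContDiff ℝ 1 (pT g) := contDiff_pT hP
  have hPx1 : ContDiff ℝ 1 (pX g) := contDiff_pX hP
  -- translation of partial derivatives
  have eVt : ∀ x t, partialT V x t = pT f (x, t) := fun x t =>
    (hasDerivAt_pT (hVd (x, t))).deriv
  have ePt : ∀ x t, partialT P x t = pT g (x, t) := fun x t =>
    (hasDerivAt_pT (hPd (x, t))).deriv
  have eVx : ∀ x t, partialX V x t = pX f (x, t) := fun x t =>
    (hasDerivAt_pX (hVd (x, t))).deriv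
  have ePx : ∀ x t, partialX P x t = pX g (x, t) := fun x t =>
    (hasDerivAt_pX (hPd (x, t))).deriv
  have eVtt : ∀ x t, partialTT V x t = pT (pT f) (x, t) := by
    intro x t
    have h : (fun s => partialT V x s) = fun s => pT f (x, s) := funext fun s => eVt x s
    unfold partialTT
    rw [h]
    exact (hasDerivAt_pT (hVt1.differentiable one_ne_zero (x, t))).deriv
  have ePtt : ∀ x t, partialTT P x t = pT (pT g) (x, t) := by
    intro x t
    have h : (fun s => partialT P x s) = fun s => pT g (x, s) := funext fun s => ePt x s
    unfold partialTT
    rw [h]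
    exact (hasDerivAt_pT (hPt1.differentiable one_ne_zero (x, t))).deriv
  have eVxx : ∀ x t, partialXX V x t = pX (pX f) (x, t) := by
    intro x t
    have h : (fun y => partialX V y t) = fun y => pX f (y, t) := funext fun y => eVx y t
    unfold partialXX
    rw [h]
    exact (hasDerivAt_pX (hVx1.differentiable one_ne_zero (x, t))).deriv
  have ePxx : ∀ x t, partialXX P x t = pX (pX g) (x, t) := by
    intro x t
    have h : (fun y => partialX P y t) = fun y => pX g (y, t) := funext fun y => ePx y t
    unfold partialXX
    rw [h]
    exact (hasDerivAt_pX (hPx1.differentiable one_ne_zero (x, t))).deriv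
  -- PDEs and boundary conditions in new notation
  have heq1' : ∀ x ∈ Set.Icc (0:ℝ) L,
      ρ * pT (pT f) (x, t₀) - α * pX (pX f) (x, t₀) + γ * β * pX (pX g) (x, t₀) = 0 := by
    intro x hx
    have h := heq1 x hx t₀ ht₀
    rwa [eVtt, eVxx, ePxx] at h
  have heq2' : ∀ x ∈ Set.Icc (0:ℝ) L,
      μ * pT (pT g) (x, t₀) - β * pX (pX g) (x, t₀) + γ * β * pX (pX f) (x, t₀) = 0 := by
    intro x hx
    have h := heq2 x hx t₀ ht₀
    rwa [ePtt, ePxx, eVxx] at h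
  have hbcV' : α * pX f (L, t₀) - γ * β * pX g (L, t₀) + ξ₁ * pT f (L, t₀)
      + m₁ * pT (pT f) (L, t₀) = 0 := by
    have h := hbcV t₀ ht₀
    rwa [eVx, ePx, eVt, eVtt] at h
  have hbcP' : β * pX g (L, t₀) - γ * β * pX f (L, t₀) + ξ₂ * pT g (L, t₀)
      + m₂ * pT (pT g) (L, t₀) = 0 := by
    have h := hbcP t₀ ht₀
    rwa [ePx, eVx, ePt, ePtt] at h
  -- Clairaut
  have hcV : ∀ p : ℝ × ℝ, pX (pT f) p = pT (pX f) p := clairaut hV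
  have hcP : ∀ p : ℝ × ℝ, pX (pT g) p = pT (pX g) p := clairaut hP
  -- vanishing of velocities at x = 0
  have hzero : ∀ (F : ℝ × ℝ → ℝ), ContDiff ℝ 2 F → (∀ s ∈ Set.Icc (0:ℝ) T, F (0, s) = 0) →
      pT F (0, t₀) = 0 := by
    intro F hF hF0
    have hFd : Differentiable ℝ F := hF.differentiable two_ne_zero
    have hsub : Set.Ioo (0:ℝ) T ⊆ {s : ℝ | pT F (0, s) = 0} := by
      intro s hs
      have hev : (fun u => F ((0:ℝ), u)) =ᶠ[nhds s] fun _ => (0:ℝ) := by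
        filter_upwards [Ioo_mem_nhds hs.1 hs.2] with u hu
        exact hF0 u ⟨hu.1.le, hu.2.le⟩
      have h1 : pT F (0, s) = deriv (fun u => F ((0:ℝ), u)) s :=
        ((hasDerivAt_pT (hFd (0, s))).deriv).symm
      simp only [Set.mem_setOf_eq]
      rw [h1, hev.deriv_eq]
      simp
    have hclosed : IsClosed {s : ℝ | pT F (0, s) = 0} := by
      have hc : Continuous fun s : ℝ => pT F (0, s) :=
        (contDiff_pT hF).continuous.comp (continuous_const.prodMk continuous_id)
      exact isClosed_eq hc continuous_const
    have h2 := closure_minimal hsub hclosed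
    rw [closure_Ioo hT.ne] at h2
    exact h2 ht₀
  have hVt0 : pT f (0, t₀) = 0 := hzero f hV fun s hs => (hbc0 s hs).1
  have hPt0 : pT g (0, t₀) = 0 := hzero g hP fun s hs => (hbc0 s hs).2
  -- continuity of the integrands
  have hΦc := continuous_Phi ρ μ β α₁ γ hV hP
  have hΨc := continuous_Psi ρ μ β α₁ γ hV hP
  have hsec : ∀ (φ : ℝ × ℝ → ℝ), Continuous φ → ∀ t : ℝ, Continuous fun x => φ (x, t) :=
    fun φ hφ t => hφ.comp (continuous_id.prodMk continuous_const)
  -- differentiation under the integral sign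
  obtain ⟨C, hC⟩ := ((isCompact_uIcc (a := (0:ℝ)) (b := L)).prod
      (isCompact_closedBall t₀ 1)).exists_bound_of_continuousOn hΨc.continuousOn
  have hInt : HasDerivAt (fun t => ∫ x in (0:ℝ)..L, Phi ρ μ β α₁ γ f g (x, t))
      (∫ x in (0:ℝ)..L, Psi ρ μ β α₁ γ f g (x, t₀)) t₀ := by
    have H := intervalIntegral.hasDerivAt_integral_of_dominated_loc_of_deriv_le
      (F := fun t x => Phi ρ μ β α₁ γ f g (x, t))
      (F' := fun t x => Psi ρ μ β α₁ γ f g (x, t))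
      (bound := fun _ => C) (a := (0:ℝ)) (b := L) (μ := MeasureTheory.volume)
      (x₀ := t₀) (Metric.ball_mem_nhds t₀ one_pos)
      (Filter.Eventually.of_forall fun t => (hsec _ hΦc t).aestronglyMeasurable)
      ((hsec _ hΦc t₀).intervalIntegrable 0 L)
      ((hsec _ hΨc t₀).aestronglyMeasurable)
      (Filter.Eventually.of_forall fun x hx t ht =>
        hC (x, t) (Set.mk_mem_prod (Set.uIoc_subset_uIcc hx) (Metric.ball_subset_closedBall ht)))
      intervalIntegrable_const
      (Filter.Eventually.of_forall fun x _ t _ => hasDerivAt_Phi ρ μ β α₁ γ hV hP x t)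
    exact H.2
  -- derivative of the boundary terms
  have hB1 : HasDerivAt (fun t => m₁ / 2 * pT f (L, t) ^ 2)
      (m₁ * (pT f (L, t₀) * pT (pT f) (L, t₀))) t₀ := by
    have h := ((hasDerivAt_pT (hVt1.differentiable one_ne_zero (L, t₀))).pow 2).const_mul (m₁ / 2)
    exact h.congr_deriv (by push_cast; ring)
  have hB2 : HasDerivAt (fun t => m₂ / 2 * pT g (L, t) ^ 2)
      (m₂ * (pT g (L, t₀) * pT (pT g) (L, t₀))) t₀ := by
    have h := ((hasDerivAt_pT (hPt1.differentiable one_ne_zero (L, t₀))).pow 2).const_mul (m₂ / 2)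
    exact h.congr_deriv (by push_cast; ring)
  -- the energy in new notation
  have hEeq : energy ρ μ β m₁ m₂ α₁ γ L V P = fun t =>
      1 / 2 * (∫ x in (0:ℝ)..L, Phi ρ μ β α₁ γ f g (x, t))
        + m₁ / 2 * pT f (L, t) ^ 2 + m₂ / 2 * pT g (L, t) ^ 2 := by
    funext t
    simp only [energy, Phi, eVt, eVx, ePt, ePx]
  have HD : HasDerivAt (energy ρ μ β m₁ m₂ α₁ γ L V P)
      (1 / 2 * (∫ x in (0:ℝ)..L, Psi ρ μ β α₁ γ f g (x, t₀))
        + m₁ * (pT f (L, t₀) * pT (pT f) (L, t₀))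
        + m₂ * (pT g (L, t₀) * pT (pT g) (L, t₀))) t₀ := by
    rw [hEeq]
    exact ((hInt.const_mul (1 / 2)).add hB1).add hB2
  -- integration by parts in space
  have hkey : ∀ x ∈ Set.uIcc (0:ℝ) L, HasDerivAt (fun y => Gb β γ α f g (y, t₀))
      ((fun x => 1 / 2 * Psi ρ μ β α₁ γ f g (x, t₀)) x) x := by
    intro x hx
    have hx' : x ∈ Set.Icc (0:ℝ) L := by rwa [Set.uIcc_of_le hL.le] at hx
    have H := hasDerivAt_Gb β γ α hV hP x t₀
    refine H.congr_deriv ?_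
    have e1 := heq1' x hx'
    have e2 := heq2' x hx'
    have c1 := hcV (x, t₀)
    have c2 := hcP (x, t₀)
    rw [c1, c2]
    simp only [Psi]
    linear_combination (-(pT f (x, t₀))) * e1 + (-(pT g (x, t₀))) * e2
      + (pX f (x, t₀) * pT (pX f) (x, t₀)) * hα
  have hcont : Continuous fun x => 1 / 2 * Psi ρ μ β α₁ γ f g (x, t₀) :=
    continuous_const.mul (hsec _ hΨc t₀)
  have ibp : (∫ x in (0:ℝ)..L, 1 / 2 * Psi ρ μ β α₁ γ f g (x, t₀))
      = Gb β γ α f g (L, t₀) - Gb β γ α f g (0, t₀) :=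
    intervalIntegral.integral_eq_sub_of_hasDerivAt hkey (hcont.intervalIntegrable 0 L)
  have hhalf : (1:ℝ) / 2 * (∫ x in (0:ℝ)..L, Psi ρ μ β α₁ γ f g (x, t₀))
      = ∫ x in (0:ℝ)..L, 1 / 2 * Psi ρ μ β α₁ γ f g (x, t₀) :=
    (intervalIntegral.integral_const_mul _ _).symm
  -- final algebra
  have hfinal : 1 / 2 * (∫ x in (0:ℝ)..L, Psi ρ μ β α₁ γ f g (x, t₀))
      + m₁ * (pT f (L, t₀) * pT (pT f) (L, t₀))
      + m₂ * (pT g (L, t₀) * pT (pT g) (L, t₀))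
      = -(ξ₁ * pT f (L, t₀) ^ 2) - ξ₂ * pT g (L, t₀) ^ 2 := by
    rw [hhalf, ibp]
    simp only [Gb]
    linear_combination (pT f (L, t₀)) * hbcV' + (pT g (L, t₀)) * hbcP'
      + (-(α * pX f (0, t₀)) + γ * β * pX g (0, t₀)) * hVt0
      + (-(β * pX g (0, t₀)) + γ * β * pX f (0, t₀)) * hPt0
  rw [eVt, ePt]
  exact HD.congr_deriv hfinal
end

section
/- Monotonicity of the energy: If (V,P) is a classical solution of the damped piezoelectric system on [0,L]×[0,T], then for all 0 ≤ s ≤ t ≤ T one has E(t) ≤ E(s); in particular E(t) ≤ E(0) for all t ∈ [0,T]. -/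
open Set MeasureTheory intervalIntegral Metric


private lemma sliceT {G : ℝ × ℝ → ℝ} (hG : Differentiable ℝ G) (x t : ℝ) :
    HasDerivAt (fun s => G (x, s)) (fderiv ℝ G (x, t) (0, 1)) t := by
  have h1 : HasDerivAt (fun s : ℝ => ((x, s) : ℝ × ℝ)) ((0 : ℝ), (1 : ℝ)) t :=
    (hasDerivAt_const t x).prodMk (hasDerivAt_id t)
  exact (hG (x, t)).hasFDerivAt.comp_hasDerivAt t h1

private lemma sliceX {G : ℝ × ℝ → ℝ} (hG : Differentiable ℝ G) (x t : ℝ) :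
    HasDerivAt (fun y => G (y, t)) (fderiv ℝ G (x, t) (1, 0)) x := by
  have h1 : HasDerivAt (fun y : ℝ => ((y, t) : ℝ × ℝ)) ((1 : ℝ), (0 : ℝ)) x :=
    (hasDerivAt_id x).prodMk (hasDerivAt_const x t)
  exact (hG (x, t)).hasFDerivAt.comp_hasDerivAt x h1

private lemma fderiv_apply_const {G : ℝ × ℝ → (ℝ × ℝ) →L[ℝ] ℝ} {q : ℝ × ℝ}
    (hG : DifferentiableAt ℝ G q) (v w : ℝ × ℝ) :
    fderiv ℝ (fun p => G p v) q w = fderiv ℝ G q w v := by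
  have h : HasFDerivAt (fun p => G p v)
      ((ContinuousLinearMap.apply ℝ ℝ v).comp (fderiv ℝ G q)) q :=
    (ContinuousLinearMap.apply ℝ ℝ v).hasFDerivAt.comp q hG.hasFDerivAt
  rw [h.fderiv]; rfl

private lemma symm_second {G : ℝ × ℝ → ℝ} (hG : ContDiff ℝ 2 G) (q v w : ℝ × ℝ) :
    fderiv ℝ (fun p => fderiv ℝ G p v) q w = fderiv ℝ (fun p => fderiv ℝ G p w) q v := by
  have hG1 : ContDiff ℝ 1 (fderiv ℝ G) := hG.fderiv_right (by norm_num)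
  have hd : DifferentiableAt ℝ (fderiv ℝ G) q := (hG1.differentiable one_ne_zero) q
  rw [fderiv_apply_const hd, fderiv_apply_const hd]
  exact second_derivative_symmetric (fun y => ((hG.differentiable two_ne_zero) y).hasFDerivAt)
    hd.hasFDerivAt w v


/-- Monotonicity of the energy: for a classical solution of the damped piezoelectric
system with magnetic effect and tip body, `E(t) ≤ E(s)` whenever `0 ≤ s ≤ t ≤ T`;
in particular `E(t) ≤ E(0)` for all `t ∈ [0,T]`. -/
theorem energy_monotone
    (ρ μ β m₁ m₂ ξ₁ ξ₂ L T γ α₁ α : ℝ)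
    (hρ : 0 < ρ) (hμ : 0 < μ) (hβ : 0 < β) (hm₁ : 0 < m₁) (hm₂ : 0 < m₂)
    (hξ₁ : 0 < ξ₁) (hξ₂ : 0 < ξ₂) (hL : 0 < L) (hT : 0 < T) (hα₁ : 0 < α₁)
    (hα : α = α₁ + γ ^ 2 * β)
    (V P : ℝ → ℝ → ℝ)
    (hV : ContDiff ℝ 2 (fun p : ℝ × ℝ => V p.1 p.2))
    (hP : ContDiff ℝ 2 (fun p : ℝ × ℝ => P p.1 p.2))
    (heq1 : ∀ x ∈ Set.Icc (0:ℝ) L, ∀ t ∈ Set.Icc (0:ℝ) T,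
      ρ * partialTT V x t - α * partialXX V x t + γ * β * partialXX P x t = 0)
    (heq2 : ∀ x ∈ Set.Icc (0:ℝ) L, ∀ t ∈ Set.Icc (0:ℝ) T,
      μ * partialTT P x t - β * partialXX P x t + γ * β * partialXX V x t = 0)
    (hbc0 : ∀ t ∈ Set.Icc (0:ℝ) T, V 0 t = 0 ∧ P 0 t = 0)
    (hbcV : ∀ t ∈ Set.Icc (0:ℝ) T,
      α * partialX V L t - γ * β * partialX P L t + ξ₁ * partialT V L t
        + m₁ * partialTT V L t = 0)
    (hbcP : ∀ t ∈ Set.Icc (0:ℝ) T,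
      β * partialX P L t - γ * β * partialX V L t + ξ₂ * partialT P L t
        + m₂ * partialTT P L t = 0) :
    (∀ s ∈ Set.Icc (0:ℝ) T, ∀ t ∈ Set.Icc (0:ℝ) T, s ≤ t →
        energy ρ μ β m₁ m₂ α₁ γ L V P t ≤ energy ρ μ β m₁ m₂ α₁ γ L V P s) ∧
      (∀ t ∈ Set.Icc (0:ℝ) T,
        energy ρ μ β m₁ m₂ α₁ γ L V P t ≤ energy ρ μ β m₁ m₂ α₁ γ L V P 0) := by
  set F : ℝ × ℝ → ℝ := fun p => V p.1 p.2 with hFdef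
  set Q : ℝ × ℝ → ℝ := fun p => P p.1 p.2 with hQdef
  have hVd : Differentiable ℝ F := hV.differentiable two_ne_zero
  have hQd : Differentiable ℝ Q := hP.differentiable two_ne_zero
  set VA : ℝ × ℝ → ℝ := fun p => fderiv ℝ F p (0, 1) with hVAdef
  set VB : ℝ × ℝ → ℝ := fun p => fderiv ℝ F p (1, 0) with hVBdef
  set PA : ℝ × ℝ → ℝ := fun p => fderiv ℝ Q p (0, 1) with hPAdef
  set PB : ℝ × ℝ → ℝ := fun p => fderiv ℝ Q p (1, 0) with hPBdef
  have hVA : ContDiff ℝ 1 VA := (hV.fderiv_right (by norm_num)).clm_apply contDiff_const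
  have hVB : ContDiff ℝ 1 VB := (hV.fderiv_right (by norm_num)).clm_apply contDiff_const
  have hPA : ContDiff ℝ 1 PA := (hP.fderiv_right (by norm_num)).clm_apply contDiff_const
  have hPB : ContDiff ℝ 1 PB := (hP.fderiv_right (by norm_num)).clm_apply contDiff_const
  set VAt : ℝ × ℝ → ℝ := fun p => fderiv ℝ VA p (0, 1) with hVAtdef
  set VAx : ℝ × ℝ → ℝ := fun p => fderiv ℝ VA p (1, 0) with hVAxdef
  set VBx : ℝ × ℝ → ℝ := fun p => fderiv ℝ VB p (1, 0) with hVBxdef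
  set PAt : ℝ × ℝ → ℝ := fun p => fderiv ℝ PA p (0, 1) with hPAtdef
  set PAx : ℝ × ℝ → ℝ := fun p => fderiv ℝ PA p (1, 0) with hPAxdef
  set PBx : ℝ × ℝ → ℝ := fun p => fderiv ℝ PB p (1, 0) with hPBxdef
  -- identification of partial derivatives
  have f1 : ∀ x t : ℝ, partialT V x t = VA (x, t) := fun x t => (sliceT hVd x t).deriv
  have f2 : ∀ x t : ℝ, partialX V x t = VB (x, t) := fun x t => (sliceX hVd x t).deriv
  have g1 : ∀ x t : ℝ, partialT P x t = PA (x, t) := fun x t => (sliceT hQd x t).deriv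
  have g2 : ∀ x t : ℝ, partialX P x t = PB (x, t) := fun x t => (sliceX hQd x t).deriv
  have f3 : ∀ x t : ℝ, partialTT V x t = VAt (x, t) := by
    intro x t
    have h : (fun s => partialT V x s) = fun s => VA (x, s) := funext fun s => f1 x s
    rw [partialTT, h]
    exact (sliceT (hVA.differentiable one_ne_zero) x t).deriv
  have f4 : ∀ x t : ℝ, partialXX V x t = VBx (x, t) := by
    intro x t
    have h : (fun y => partialX V y t) = fun y => VB (y, t) := funext fun y => f2 y t
    rw [partialXX, h]
    exact (sliceX (hVB.differentiable one_ne_zero) x t).deriv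
  have g3 : ∀ x t : ℝ, partialTT P x t = PAt (x, t) := by
    intro x t
    have h : (fun s => partialT P x s) = fun s => PA (x, s) := funext fun s => g1 x s
    rw [partialTT, h]
    exact (sliceT (hPA.differentiable one_ne_zero) x t).deriv
  have g4 : ∀ x t : ℝ, partialXX P x t = PBx (x, t) := by
    intro x t
    have h : (fun y => partialX P y t) = fun y => PB (y, t) := funext fun y => g2 y t
    rw [partialXX, h]
    exact (sliceX (hPB.differentiable one_ne_zero) x t).deriv
  -- symmetry of mixed second derivatives
  have fsym : ∀ p : ℝ × ℝ, fderiv ℝ VB p (0, 1) = VAx p := fun p => symm_second hV p (1, 0) (0, 1)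
  have gsym : ∀ p : ℝ × ℝ, fderiv ℝ PB p (0, 1) = PAx p := fun p => symm_second hP p (1, 0) (0, 1)

  -- continuity
  have hcVAt : Continuous VAt := ((hVA.fderiv_right (m := 0) (by norm_num)).clm_apply contDiff_const).continuous
  have hcVAx : Continuous VAx := ((hVA.fderiv_right (m := 0) (by norm_num)).clm_apply contDiff_const).continuous
  have hcVBx : Continuous VBx := ((hVB.fderiv_right (m := 0) (by norm_num)).clm_apply contDiff_const).continuous
  have hcPAt : Continuous PAt := ((hPA.fderiv_right (m := 0) (by norm_num)).clm_apply contDiff_const).continuous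
  have hcPAx : Continuous PAx := ((hPA.fderiv_right (m := 0) (by norm_num)).clm_apply contDiff_const).continuous
  have hcPBx : Continuous PBx := ((hPB.fderiv_right (m := 0) (by norm_num)).clm_apply contDiff_const).continuous
  have hcVA : Continuous VA := hVA.continuous
  have hcVB : Continuous VB := hVB.continuous
  have hcPA : Continuous PA := hPA.continuous
  have hcPB : Continuous PB := hPB.continuous
  set e : ℝ × ℝ → ℝ := fun p => ρ * VA p ^ 2 + α₁ * VB p ^ 2 + μ * PA p ^ 2
      + β * (γ * VB p - PB p) ^ 2 with hedef
  set et : ℝ × ℝ → ℝ := fun p => 2 * (ρ * VA p * VAt p + α₁ * VB p * VAx p + μ * PA p * PAt p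
      + β * (γ * VB p - PB p) * (γ * VAx p - PAx p)) with hetdef
  have hce : Continuous e := by rw [hedef]; fun_prop
  have hcet : Continuous et := by rw [hetdef]; fun_prop
  have het : ∀ x t : ℝ, HasDerivAt (fun s => e (x, s)) (et (x, t)) t := by
    intro x t
    have h1 : HasDerivAt (fun s => VA (x, s)) (VAt (x, t)) t := sliceT (hVA.differentiable one_ne_zero) x t
    have h2 : HasDerivAt (fun s => VB (x, s)) (VAx (x, t)) t :=
      fsym (x, t) ▸ sliceT (hVB.differentiable one_ne_zero) x t
    have h3 : HasDerivAt (fun s => PA (x, s)) (PAt (x, t)) t := sliceT (hPA.differentiable one_ne_zero) x t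
    have h4 : HasDerivAt (fun s => PB (x, s)) (PAx (x, t)) t :=
      gsym (x, t) ▸ sliceT (hPB.differentiable one_ne_zero) x t
    have h := ((((h1.pow 2).const_mul ρ).add ((h2.pow 2).const_mul α₁)).add
      ((h3.pow 2).const_mul μ)).add ((((h2.const_mul γ).sub h4).pow 2).const_mul β)
    convert h using 1
    all_goals first
      | rfl
      | (rw [hetdef]; simp only [Pi.sub_apply]; push_cast; ring)

  -- zero boundary at x = 0
  have hVA0 : ∀ t ∈ Icc (0:ℝ) T, VA (0, t) = 0 := by
    have hioo : ∀ t ∈ Ioo (0:ℝ) T, VA (0, t) = 0 := by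
      intro t ht
      have hev : (fun s => F ((0:ℝ), s)) =ᶠ[nhds t] fun _ => (0:ℝ) := by
        filter_upwards [Ioo_mem_nhds ht.1 ht.2] with s hs
        have h := (hbc0 s (Ioo_subset_Icc_self hs)).1
        simpa [hFdef] using h
      have h2 : VA (0, t) = deriv (fun s => F ((0:ℝ), s)) t := ((sliceT hVd 0 t).deriv).symm
      rw [h2, hev.deriv_eq, deriv_const]
    have hcl : EqOn (fun t => VA (0, t)) (fun _ => (0:ℝ)) (closure (Ioo (0:ℝ) T)) :=
      Set.EqOn.closure (fun t ht => hioo t ht)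
        (hcVA.comp (continuous_const.prodMk continuous_id)) continuous_const
    intro t ht
    have h := hcl (show t ∈ closure (Ioo (0:ℝ) T) by rw [closure_Ioo hT.ne]; exact ht)
    simpa using h
  have hPA0 : ∀ t ∈ Icc (0:ℝ) T, PA (0, t) = 0 := by
    have hioo : ∀ t ∈ Ioo (0:ℝ) T, PA (0, t) = 0 := by
      intro t ht
      have hev : (fun s => Q ((0:ℝ), s)) =ᶠ[nhds t] fun _ => (0:ℝ) := by
        filter_upwards [Ioo_mem_nhds ht.1 ht.2] with s hs
        have h := (hbc0 s (Ioo_subset_Icc_self hs)).2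
        simpa [hQdef] using h
      have h2 : PA (0, t) = deriv (fun s => Q ((0:ℝ), s)) t := ((sliceT hQd 0 t).deriv).symm
      rw [h2, hev.deriv_eq, deriv_const]
    have hcl : EqOn (fun t => PA (0, t)) (fun _ => (0:ℝ)) (closure (Ioo (0:ℝ) T)) :=
      Set.EqOn.closure (fun t ht => hioo t ht)
        (hcPA.comp (continuous_const.prodMk continuous_id)) continuous_const
    intro t ht
    have h := hcl (show t ∈ closure (Ioo (0:ℝ) T) by rw [closure_Ioo hT.ne]; exact ht)
    simpa using h
  -- restated PDE and boundary conditions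
  have heq1' : ∀ x ∈ Icc (0:ℝ) L, ∀ t ∈ Icc (0:ℝ) T,
      ρ * VAt (x, t) - α * VBx (x, t) + γ * β * PBx (x, t) = 0 := by
    intro x hx t ht
    have h := heq1 x hx t ht
    rwa [f3, f4, g4] at h
  have heq2' : ∀ x ∈ Icc (0:ℝ) L, ∀ t ∈ Icc (0:ℝ) T,
      μ * PAt (x, t) - β * PBx (x, t) + γ * β * VBx (x, t) = 0 := by
    intro x hx t ht
    have h := heq2 x hx t ht
    rwa [g3, g4, f4] at h
  have hbcV' : ∀ t ∈ Icc (0:ℝ) T,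
      α * VB (L, t) - γ * β * PB (L, t) + ξ₁ * VA (L, t) + m₁ * VAt (L, t) = 0 := by
    intro t ht
    have h := hbcV t ht
    rwa [f2, g2, f1, f3] at h
  have hbcP' : ∀ t ∈ Icc (0:ℝ) T,
      β * PB (L, t) - γ * β * VB (L, t) + ξ₂ * PA (L, t) + m₂ * PAt (L, t) = 0 := by
    intro t ht
    have h := hbcP t ht
    rwa [g2, f2, g1, g3] at h
  -- differentiation under the integral sign
  have hItg : ∀ t₀ : ℝ, HasDerivAt (fun τ => ∫ x in (0:ℝ)..L, e (x, τ))
      (∫ x in (0:ℝ)..L, et (x, t₀)) t₀ := by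
    intro t₀
    obtain ⟨C, hC⟩ := ((isCompact_uIcc (a := (0:ℝ)) (b := L)).prod
      (isCompact_Icc (a := t₀ - 1) (b := t₀ + 1))).exists_bound_of_continuousOn
      hcet.continuousOn
    refine (intervalIntegral.hasDerivAt_integral_of_dominated_loc_of_deriv_le
      (F := fun τ x => e (x, τ)) (F' := fun τ x => et (x, τ)) (bound := fun _ => C)
      (Metric.ball_mem_nhds t₀ one_pos) ?_ ?_ ?_ ?_ ?_ ?_).2
    · exact Filter.Eventually.of_forall fun τ =>
        ((hce.comp (continuous_id.prodMk continuous_const)).aestronglyMeasurable)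
    · exact (hce.comp (continuous_id.prodMk continuous_const)).intervalIntegrable 0 L
    · exact (hcet.comp (continuous_id.prodMk continuous_const)).aestronglyMeasurable
    · refine Filter.Eventually.of_forall fun x hx τ hτ => ?_
      refine hC (x, τ) ⟨Set.uIoc_subset_uIcc hx, ?_⟩
      have := hτ
      rw [Real.ball_eq_Ioo] at this
      exact Ioo_subset_Icc_self this
    · exact intervalIntegrable_const
    · exact Filter.Eventually.of_forall fun x hx τ hτ => het x τ

  -- integration by parts in space
  set Gf : ℝ × ℝ → ℝ := fun p => α * VA p * VB p - γ * β * VA p * PB p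
      - γ * β * PA p * VB p + β * PA p * PB p with hGfdef
  have hIBP : ∀ t ∈ Icc (0:ℝ) T,
      ∫ x in (0:ℝ)..L, et (x, t) = 2 * Gf (L, t) - 2 * Gf (0, t) := by
    intro t ht
    have hG' : ∀ x : ℝ, HasDerivAt (fun y => (2:ℝ) * Gf (y, t))
        (2 * (α * (VAx (x, t) * VB (x, t) + VA (x, t) * VBx (x, t))
          - γ * β * (VAx (x, t) * PB (x, t) + VA (x, t) * PBx (x, t))
          - γ * β * (PAx (x, t) * VB (x, t) + PA (x, t) * VBx (x, t))
          + β * (PAx (x, t) * PB (x, t) + PA (x, t) * PBx (x, t)))) x := by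
      intro x
      have h1 : HasDerivAt (fun y => VA (y, t)) (VAx (x, t)) x :=
        sliceX (hVA.differentiable one_ne_zero) x t
      have h2 : HasDerivAt (fun y => VB (y, t)) (VBx (x, t)) x :=
        sliceX (hVB.differentiable one_ne_zero) x t
      have h3 : HasDerivAt (fun y => PA (y, t)) (PAx (x, t)) x :=
        sliceX (hPA.differentiable one_ne_zero) x t
      have h4 : HasDerivAt (fun y => PB (y, t)) (PBx (x, t)) x :=
        sliceX (hPB.differentiable one_ne_zero) x t
      have h := (((((h1.const_mul α).mul h2).sub ((h1.const_mul (γ * β)).mul h4)).sub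
        ((h3.const_mul (γ * β)).mul h2)).add ((h3.const_mul β).mul h4)).const_mul 2
      convert h using 1
      all_goals first
        | rfl
        | (push_cast; ring)
        | (simp only [hGfdef]; push_cast; ring)
    have hint2 : IntervalIntegrable (fun x => 2 * (α * (VAx (x, t) * VB (x, t) + VA (x, t) * VBx (x, t))
          - γ * β * (VAx (x, t) * PB (x, t) + VA (x, t) * PBx (x, t))
          - γ * β * (PAx (x, t) * VB (x, t) + PA (x, t) * VBx (x, t))
          + β * (PAx (x, t) * PB (x, t) + PA (x, t) * PBx (x, t)))) MeasureTheory.volume 0 L := by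
      apply Continuous.intervalIntegrable
      fun_prop
    have heqOn : EqOn (fun x => et (x, t)) (fun x => 2 * (α * (VAx (x, t) * VB (x, t) + VA (x, t) * VBx (x, t))
          - γ * β * (VAx (x, t) * PB (x, t) + VA (x, t) * PBx (x, t))
          - γ * β * (PAx (x, t) * VB (x, t) + PA (x, t) * VBx (x, t))
          + β * (PAx (x, t) * PB (x, t) + PA (x, t) * PBx (x, t)))) (uIcc (0:ℝ) L) := by
      intro x hx
      have hx' : x ∈ Icc (0:ℝ) L := by rwa [uIcc_of_le hL.le] at hx
      have e1 := heq1' x hx' t ht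
      have e2 := heq2' x hx' t ht
      simp only [hetdef]
      linear_combination 2 * VA (x, t) * e1 + 2 * PA (x, t) * e2
        - 2 * VB (x, t) * VAx (x, t) * hα
    rw [intervalIntegral.integral_congr heqOn]
    have hfin := intervalIntegral.integral_eq_sub_of_hasDerivAt
      (f := fun y => (2:ℝ) * Gf (y, t)) (fun x _ => hG' x) hint2
    simpa using hfin
  -- the energy function in the new notation
  have hE : energy ρ μ β m₁ m₂ α₁ γ L V P = fun t =>
      (1 / 2) * (∫ x in (0:ℝ)..L, e (x, t)) + m₁ / 2 * VA (L, t) ^ 2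
        + m₂ / 2 * PA (L, t) ^ 2 := by
    funext t
    simp only [energy, f1, f2, g1, g2, hedef]
  -- derivative of the energy
  have hDer : ∀ t ∈ Icc (0:ℝ) T, HasDerivAt (fun τ =>
      (1 / 2) * (∫ x in (0:ℝ)..L, e (x, τ)) + m₁ / 2 * VA (L, τ) ^ 2
        + m₂ / 2 * PA (L, τ) ^ 2)
      (-(ξ₁ * VA (L, t) ^ 2) - ξ₂ * PA (L, t) ^ 2) t := by
    intro t ht
    have h1 : HasDerivAt (fun τ => VA (L, τ)) (VAt (L, t)) t :=
      sliceT (hVA.differentiable one_ne_zero) L t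
    have h3 : HasDerivAt (fun τ => PA (L, τ)) (PAt (L, t)) t :=
      sliceT (hPA.differentiable one_ne_zero) L t
    have h := (((hItg t).const_mul (1 / 2)).add ((h1.pow 2).const_mul (m₁ / 2))).add
      ((h3.pow 2).const_mul (m₂ / 2))
    convert h using 1
    case e'_4 => rfl
    case e'_5 => rfl
    case e'_8 => rfl
    rw [hIBP t ht]
    have h0 : Gf (0, t) = 0 := by
      simp only [hGfdef]
      rw [hVA0 t ht, hPA0 t ht]
      ring
    rw [h0]
    have hbV := hbcV' t ht
    have hbP := hbcP' t ht
    simp only [hGfdef]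
    push_cast
    linear_combination (-VA (L, t)) * hbV + (-PA (L, t)) * hbP
  -- monotonicity
  have hanti : AntitoneOn (fun τ =>
      (1 / 2) * (∫ x in (0:ℝ)..L, e (x, τ)) + m₁ / 2 * VA (L, τ) ^ 2
        + m₂ / 2 * PA (L, τ) ^ 2) (Icc (0:ℝ) T) := by
    apply antitoneOn_of_deriv_nonpos (convex_Icc 0 T)
    · intro τ hτ
      exact (hDer τ hτ).continuousAt.continuousWithinAt
    · intro τ hτ
      rw [interior_Icc] at hτ
      exact ((hDer τ (Ioo_subset_Icc_self hτ)).differentiableAt).differentiableWithinAt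
    · intro τ hτ
      rw [interior_Icc] at hτ
      rw [(hDer τ (Ioo_subset_Icc_self hτ)).deriv]
      nlinarith [sq_nonneg (VA (L, τ)), sq_nonneg (PA (L, τ)), hξ₁.le, hξ₂.le,
        mul_nonneg hξ₁.le (sq_nonneg (VA (L, τ))), mul_nonneg hξ₂.le (sq_nonneg (PA (L, τ)))]
  rw [hE]
  exact ⟨fun s hs t ht hst => hanti hs ht hst,
    fun t ht => hanti (left_mem_Icc.mpr hT.le) ht ht.1⟩
end

section
/- Conservation of energy for the undamped system with tip body: If V, P are real-valued C² functions on [0,L]×[0,T] satisfying ρV_tt − αV_xx + γβP_xx = 0 and μP_tt − βP_xx + γβV_xx = 0 on [0,L]×[0,T], together with V(0,t) = P(0,t) = 0, αV_x(L,t) − γβP_x(L,t) + m₁V_tt(L,t) = 0 and βP_x(L,t) − γβV_x(L,t) + m₂P_tt(L,t) = 0 for all t ∈ [0,T], then E(t) = E(0) for all t ∈ [0,T]. -/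
open MeasureTheory intervalIntegral Set

noncomputable section EnergyConservationAux

def D1 (V : ℝ → ℝ → ℝ) : ℝ × ℝ → (ℝ × ℝ) →L[ℝ] ℝ :=
  fderiv ℝ (fun p : ℝ × ℝ => V p.1 p.2)

def D2 (V : ℝ → ℝ → ℝ) : ℝ × ℝ → (ℝ × ℝ) →L[ℝ] (ℝ × ℝ) →L[ℝ] ℝ :=
  fderiv ℝ (D1 V)

variable {V : ℝ → ℝ → ℝ}

theorem contDiff_D1 (hV : ContDiff ℝ 2 (fun p : ℝ × ℝ => V p.1 p.2)) :
    ContDiff ℝ 1 (D1 V) := hV.fderiv_right (by norm_num)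

theorem continuous_D2 (hV : ContDiff ℝ 2 (fun p : ℝ × ℝ => V p.1 p.2)) :
    Continuous (D2 V) := (contDiff_D1 hV).continuous_fderiv one_ne_zero

theorem curveT (x t : ℝ) : HasDerivAt (fun s : ℝ => (x, s)) ((0:ℝ), (1:ℝ)) t :=
  (hasDerivAt_const t x).prodMk (hasDerivAt_id t)

theorem curveX (x t : ℝ) : HasDerivAt (fun y : ℝ => (y, t)) ((1:ℝ), (0:ℝ)) x :=
  (hasDerivAt_id x).prodMk (hasDerivAt_const x t)

theorem hasDerivAt_T (hV : ContDiff ℝ 2 (fun p : ℝ × ℝ => V p.1 p.2)) (x t : ℝ) :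
    HasDerivAt (fun s => V x s) (D1 V (x, t) (0, 1)) t :=
  ((hV.differentiable (by norm_num)).differentiableAt.hasFDerivAt).comp_hasDerivAt t (curveT x t)

theorem hasDerivAt_X (hV : ContDiff ℝ 2 (fun p : ℝ × ℝ => V p.1 p.2)) (x t : ℝ) :
    HasDerivAt (fun y => V y t) (D1 V (x, t) (1, 0)) x :=
  ((hV.differentiable (by norm_num)).differentiableAt.hasFDerivAt).comp_hasDerivAt x (curveX x t)

theorem partialT_eq (hV : ContDiff ℝ 2 (fun p : ℝ × ℝ => V p.1 p.2)) (x t : ℝ) :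
    partialT V x t = D1 V (x, t) (0, 1) := (hasDerivAt_T hV x t).deriv

theorem partialX_eq (hV : ContDiff ℝ 2 (fun p : ℝ × ℝ => V p.1 p.2)) (x t : ℝ) :
    partialX V x t = D1 V (x, t) (1, 0) := (hasDerivAt_X hV x t).deriv

theorem hasDerivAt_D1_T (hV : ContDiff ℝ 2 (fun p : ℝ × ℝ => V p.1 p.2)) (x t : ℝ)
    (w : ℝ × ℝ) :
    HasDerivAt (fun s => D1 V (x, s) w) (D2 V (x, t) (0, 1) w) t := by
  have hc : HasDerivAt (fun s => D1 V (x, s)) (D2 V (x, t) (0, 1)) t :=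
    (((contDiff_D1 hV).differentiable one_ne_zero).differentiableAt.hasFDerivAt).comp_hasDerivAt
      t (curveT x t)
  simpa using hc.clm_apply (hasDerivAt_const t w)

theorem hasDerivAt_D1_X (hV : ContDiff ℝ 2 (fun p : ℝ × ℝ => V p.1 p.2)) (x t : ℝ)
    (w : ℝ × ℝ) :
    HasDerivAt (fun y => D1 V (y, t) w) (D2 V (x, t) (1, 0) w) x := by
  have hc : HasDerivAt (fun y => D1 V (y, t)) (D2 V (x, t) (1, 0)) x :=
    (((contDiff_D1 hV).differentiable one_ne_zero).differentiableAt.hasFDerivAt).comp_hasDerivAt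
      x (curveX x t)
  simpa using hc.clm_apply (hasDerivAt_const x w)

theorem hasDerivAt_partialT_T (hV : ContDiff ℝ 2 (fun p : ℝ × ℝ => V p.1 p.2)) (x t : ℝ) :
    HasDerivAt (fun s => partialT V x s) (D2 V (x, t) (0, 1) (0, 1)) t := by
  have : (fun s => partialT V x s) = fun s => D1 V (x, s) (0, 1) :=
    funext fun s => partialT_eq hV x s
  rw [this]; exact hasDerivAt_D1_T hV x t _

theorem hasDerivAt_partialX_T (hV : ContDiff ℝ 2 (fun p : ℝ × ℝ => V p.1 p.2)) (x t : ℝ) :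
    HasDerivAt (fun s => partialX V x s) (D2 V (x, t) (0, 1) (1, 0)) t := by
  have : (fun s => partialX V x s) = fun s => D1 V (x, s) (1, 0) :=
    funext fun s => partialX_eq hV x s
  rw [this]; exact hasDerivAt_D1_T hV x t _

theorem hasDerivAt_partialT_X (hV : ContDiff ℝ 2 (fun p : ℝ × ℝ => V p.1 p.2)) (x t : ℝ) :
    HasDerivAt (fun y => partialT V y t) (D2 V (x, t) (1, 0) (0, 1)) x := by
  have : (fun y => partialT V y t) = fun y => D1 V (y, t) (0, 1) :=
    funext fun y => partialT_eq hV y t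
  rw [this]; exact hasDerivAt_D1_X hV x t _

theorem hasDerivAt_partialX_X (hV : ContDiff ℝ 2 (fun p : ℝ × ℝ => V p.1 p.2)) (x t : ℝ) :
    HasDerivAt (fun y => partialX V y t) (D2 V (x, t) (1, 0) (1, 0)) x := by
  have : (fun y => partialX V y t) = fun y => D1 V (y, t) (1, 0) :=
    funext fun y => partialX_eq hV y t
  rw [this]; exact hasDerivAt_D1_X hV x t _

theorem partialTT_eq (hV : ContDiff ℝ 2 (fun p : ℝ × ℝ => V p.1 p.2)) (x t : ℝ) :
    partialTT V x t = D2 V (x, t) (0, 1) (0, 1) := (hasDerivAt_partialT_T hV x t).deriv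

theorem partialXX_eq (hV : ContDiff ℝ 2 (fun p : ℝ × ℝ => V p.1 p.2)) (x t : ℝ) :
    partialXX V x t = D2 V (x, t) (1, 0) (1, 0) := (hasDerivAt_partialX_X hV x t).deriv

theorem partialTX_eq (hV : ContDiff ℝ 2 (fun p : ℝ × ℝ => V p.1 p.2)) (x t : ℝ) :
    deriv (fun s => partialX V x s) t = D2 V (x, t) (0, 1) (1, 0) :=
  (hasDerivAt_partialX_T hV x t).deriv

theorem D2_symm (hV : ContDiff ℝ 2 (fun p : ℝ × ℝ => V p.1 p.2)) (p : ℝ × ℝ)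
    (u w : ℝ × ℝ) : D2 V p u w = D2 V p w u :=
  second_derivative_symmetric
    (fun y => (hV.differentiable (by norm_num)).differentiableAt.hasFDerivAt)
    (((contDiff_D1 hV).differentiable one_ne_zero).differentiableAt.hasFDerivAt) u w

theorem continuous_partialT (hV : ContDiff ℝ 2 (fun p : ℝ × ℝ => V p.1 p.2)) :
    Continuous fun p : ℝ × ℝ => partialT V p.1 p.2 := by
  have : (fun p : ℝ × ℝ => partialT V p.1 p.2) = fun p => D1 V p (0, 1) := by
    funext p; rw [partialT_eq hV p.1 p.2]
  rw [this]
  exact (contDiff_D1 hV).continuous.clm_apply continuous_const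

theorem continuous_partialX (hV : ContDiff ℝ 2 (fun p : ℝ × ℝ => V p.1 p.2)) :
    Continuous fun p : ℝ × ℝ => partialX V p.1 p.2 := by
  have : (fun p : ℝ × ℝ => partialX V p.1 p.2) = fun p => D1 V p (1, 0) := by
    funext p; rw [partialX_eq hV p.1 p.2]
  rw [this]
  exact (contDiff_D1 hV).continuous.clm_apply continuous_const

theorem continuous_partialTT (hV : ContDiff ℝ 2 (fun p : ℝ × ℝ => V p.1 p.2)) :
    Continuous fun p : ℝ × ℝ => partialTT V p.1 p.2 := by
  have : (fun p : ℝ × ℝ => partialTT V p.1 p.2) = fun p => D2 V p (0, 1) (0, 1) := by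
    funext p; rw [partialTT_eq hV p.1 p.2]
  rw [this]
  exact ((continuous_D2 hV).clm_apply continuous_const).clm_apply continuous_const

theorem continuous_partialTX (hV : ContDiff ℝ 2 (fun p : ℝ × ℝ => V p.1 p.2)) :
    Continuous fun p : ℝ × ℝ => deriv (fun s => partialX V p.1 s) p.2 := by
  have : (fun p : ℝ × ℝ => deriv (fun s => partialX V p.1 s) p.2)
      = fun p => D2 V p (0, 1) (1, 0) := by
    funext p; rw [partialTX_eq hV p.1 p.2]
  rw [this]
  exact ((continuous_D2 hV).clm_apply continuous_const).clm_apply continuous_const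

/-! ### Energy-specific definitions -/

/-- Energy density (twice the physical density, no `1/2`). -/
def eDen (ρ μ β α₁ γ : ℝ) (V P : ℝ → ℝ → ℝ) (x s : ℝ) : ℝ :=
  ρ * partialT V x s ^ 2 + α₁ * partialX V x s ^ 2 + μ * partialT P x s ^ 2
    + β * (γ * partialX V x s - partialX P x s) ^ 2

/-- Time derivative of the energy density. -/
def fDen (ρ μ β α₁ γ : ℝ) (V P : ℝ → ℝ → ℝ) (x s : ℝ) : ℝ :=
  2 * (ρ * partialT V x s * partialTT V x s
    + α₁ * partialX V x s * deriv (fun σ => partialX V x σ) s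
    + μ * partialT P x s * partialTT P x s
    + β * (γ * partialX V x s - partialX P x s)
        * (γ * deriv (fun σ => partialX V x σ) s - deriv (fun σ => partialX P x σ) s))

/-- Boundary flux. -/
def gFlux (β γ α : ℝ) (V P : ℝ → ℝ → ℝ) (x s : ℝ) : ℝ :=
  partialT V x s * (α * partialX V x s - γ * β * partialX P x s)
    + partialT P x s * (β * partialX P x s - γ * β * partialX V x s)

variable {P : ℝ → ℝ → ℝ} {ρ μ β α₁ γ α : ℝ}

theorem hasDerivAt_eDen (hV : ContDiff ℝ 2 (fun p : ℝ × ℝ => V p.1 p.2))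
    (hP : ContDiff ℝ 2 (fun p : ℝ × ℝ => P p.1 p.2)) (x s : ℝ) :
    HasDerivAt (fun σ => eDen ρ μ β α₁ γ V P x σ) (fDen ρ μ β α₁ γ V P x s) s := by
  have hVt : HasDerivAt (fun σ => partialT V x σ) (partialTT V x s) s := by
    rw [partialTT_eq hV]; exact hasDerivAt_partialT_T hV x s
  have hPt : HasDerivAt (fun σ => partialT P x σ) (partialTT P x s) s := by
    rw [partialTT_eq hP]; exact hasDerivAt_partialT_T hP x s
  have hVx : HasDerivAt (fun σ => partialX V x σ) (deriv (fun σ => partialX V x σ) s) s := by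
    rw [partialTX_eq hV]; exact hasDerivAt_partialX_T hV x s
  have hPx : HasDerivAt (fun σ => partialX P x σ) (deriv (fun σ => partialX P x σ) s) s := by
    rw [partialTX_eq hP]; exact hasDerivAt_partialX_T hP x s
  have h := ((((hVt.pow 2).const_mul ρ).add ((hVx.pow 2).const_mul α₁)).add
      ((hPt.pow 2).const_mul μ)).add
      ((((hVx.const_mul γ).sub hPx).pow 2).const_mul β)
  refine h.congr_deriv ?_
  unfold fDen
  simp only [Pi.sub_apply]
  ring

theorem hasDerivAt_gFlux (hV : ContDiff ℝ 2 (fun p : ℝ × ℝ => V p.1 p.2))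
    (hP : ContDiff ℝ 2 (fun p : ℝ × ℝ => P p.1 p.2)) (x s : ℝ) :
    HasDerivAt (fun y => gFlux β γ α V P y s)
      (deriv (fun σ => partialX V x σ) s * (α * partialX V x s - γ * β * partialX P x s)
        + partialT V x s * (α * partialXX V x s - γ * β * partialXX P x s)
        + (deriv (fun σ => partialX P x σ) s * (β * partialX P x s - γ * β * partialX V x s)
        + partialT P x s * (β * partialXX P x s - γ * β * partialXX V x s))) x := by
  have hVt : HasDerivAt (fun y => partialT V y s) (deriv (fun σ => partialX V x σ) s) x := by
    have h := hasDerivAt_partialT_X hV x s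
    rwa [D2_symm hV, ← partialTX_eq hV] at h
  have hPt : HasDerivAt (fun y => partialT P y s) (deriv (fun σ => partialX P x σ) s) x := by
    have h := hasDerivAt_partialT_X hP x s
    rwa [D2_symm hP, ← partialTX_eq hP] at h
  have hVx : HasDerivAt (fun y => partialX V y s) (partialXX V x s) x := by
    rw [partialXX_eq hV]; exact hasDerivAt_partialX_X hV x s
  have hPx : HasDerivAt (fun y => partialX P y s) (partialXX P x s) x := by
    rw [partialXX_eq hP]; exact hasDerivAt_partialX_X hP x s
  exact (hVt.mul ((hVx.const_mul α).sub (hPx.const_mul (γ * β)))).add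
    (hPt.mul ((hPx.const_mul β).sub (hVx.const_mul (γ * β))))

theorem continuous_fDen (hV : ContDiff ℝ 2 (fun p : ℝ × ℝ => V p.1 p.2))
    (hP : ContDiff ℝ 2 (fun p : ℝ × ℝ => P p.1 p.2)) :
    Continuous fun p : ℝ × ℝ => fDen ρ μ β α₁ γ V P p.1 p.2 := by
  unfold fDen
  exact continuous_const.mul
    (((((continuous_const.mul (continuous_partialT hV)).mul (continuous_partialTT hV)).add
      ((continuous_const.mul (continuous_partialX hV)).mul (continuous_partialTX hV))).add
      ((continuous_const.mul (continuous_partialT hP)).mul (continuous_partialTT hP))).add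
      ((continuous_const.mul
        ((continuous_const.mul (continuous_partialX hV)).sub (continuous_partialX hP))).mul
         ((continuous_const.mul (continuous_partialTX hV)).sub (continuous_partialTX hP))))

theorem continuous_eDen (hV : ContDiff ℝ 2 (fun p : ℝ × ℝ => V p.1 p.2))
    (hP : ContDiff ℝ 2 (fun p : ℝ × ℝ => P p.1 p.2)) :
    Continuous fun p : ℝ × ℝ => eDen ρ μ β α₁ γ V P p.1 p.2 := by
  unfold eDen
  exact (((continuous_const.mul ((continuous_partialT hV).pow 2)).add
    (continuous_const.mul ((continuous_partialX hV).pow 2))).add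
    (continuous_const.mul ((continuous_partialT hP).pow 2))).add
    (continuous_const.mul
      (((continuous_const.mul (continuous_partialX hV)).sub (continuous_partialX hP)).pow 2))


end EnergyConservationAux

set_option maxHeartbeats 1000000 in
/-- Conservation of energy for the undamped piezoelectric system with tip body:
the energy is constant in time. -/
theorem energy_conservation_undamped
    (ρ μ β m₁ m₂ L T γ α₁ α : ℝ)
    (hρ : 0 < ρ) (hμ : 0 < μ) (hβ : 0 < β) (hm₁ : 0 < m₁) (hm₂ : 0 < m₂)
    (hL : 0 < L) (hT : 0 < T) (hα₁ : 0 < α₁)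
    (hα : α = α₁ + γ ^ 2 * β)
    (V P : ℝ → ℝ → ℝ)
    (hV : ContDiff ℝ 2 (fun p : ℝ × ℝ => V p.1 p.2))
    (hP : ContDiff ℝ 2 (fun p : ℝ × ℝ => P p.1 p.2))
    (heq1 : ∀ x ∈ Set.Icc (0:ℝ) L, ∀ t ∈ Set.Icc (0:ℝ) T,
      ρ * partialTT V x t - α * partialXX V x t + γ * β * partialXX P x t = 0)
    (heq2 : ∀ x ∈ Set.Icc (0:ℝ) L, ∀ t ∈ Set.Icc (0:ℝ) T,
      μ * partialTT P x t - β * partialXX P x t + γ * β * partialXX V x t = 0)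
    (hbc0 : ∀ t ∈ Set.Icc (0:ℝ) T, V 0 t = 0 ∧ P 0 t = 0)
    (hbcV : ∀ t ∈ Set.Icc (0:ℝ) T,
      α * partialX V L t - γ * β * partialX P L t + m₁ * partialTT V L t = 0)
    (hbcP : ∀ t ∈ Set.Icc (0:ℝ) T,
      β * partialX P L t - γ * β * partialX V L t + m₂ * partialTT P L t = 0) :
    ∀ t ∈ Set.Icc (0:ℝ) T,
      energy ρ μ β m₁ m₂ α₁ γ L V P t = energy ρ μ β m₁ m₂ α₁ γ L V P 0 := by
  intro t' ht'
  obtain ⟨ht0, htT⟩ := ht'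
  have hIcc : Set.uIcc (0:ℝ) t' = Set.Icc 0 t' := Set.uIcc_of_le ht0
  have cF : Continuous fun p : ℝ × ℝ => fDen ρ μ β α₁ γ V P p.1 p.2 := continuous_fDen hV hP
  have cE : Continuous fun p : ℝ × ℝ => eDen ρ μ β α₁ γ V P p.1 p.2 := continuous_eDen hV hP
  have cFs : ∀ x : ℝ, Continuous fun s => fDen ρ μ β α₁ γ V P x s :=
    fun x => cF.comp (continuous_const.prodMk continuous_id)
  have cFx : ∀ s : ℝ, Continuous fun x => fDen ρ μ β α₁ γ V P x s :=
    fun s => cF.comp (continuous_id.prodMk continuous_const)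
  have cEx : ∀ τ : ℝ, Continuous fun x => eDen ρ μ β α₁ γ V P x τ :=
    fun τ => cE.comp (continuous_id.prodMk continuous_const)
  -- Step A : fundamental theorem of calculus in time, for each x
  have hA : ∀ x : ℝ, (∫ s in (0:ℝ)..t', fDen ρ μ β α₁ γ V P x s)
      = eDen ρ μ β α₁ γ V P x t' - eDen ρ μ β α₁ γ V P x 0 := fun x =>
    integral_eq_sub_of_hasDerivAt (fun s _ => hasDerivAt_eDen hV hP x s)
      ((cFs x).intervalIntegrable 0 t')
  -- Step C : spatial derivative of the flux equals (1/2) * fDen on the rectangle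
  have hGF : ∀ s ∈ Set.Icc (0:ℝ) T, ∀ x ∈ Set.Icc (0:ℝ) L,
      HasDerivAt (fun y => gFlux β γ α V P y s) ((1/2) * fDen ρ μ β α₁ γ V P x s) x := by
    intro s hs x hx
    have h := hasDerivAt_gFlux (β := β) (γ := γ) (α := α) hV hP x s
    refine h.congr_deriv ?_
    symm
    have h1 := heq1 x hx s hs
    have h2 := heq2 x hx s hs
    unfold fDen
    linear_combination (partialT V x s) * h1 + (partialT P x s) * h2
      - (partialX V x s * deriv (fun σ => partialX V x σ) s) * hα
  have hC : ∀ s ∈ Set.Icc (0:ℝ) T,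
      (∫ x in (0:ℝ)..L, fDen ρ μ β α₁ γ V P x s)
        = 2 * (gFlux β γ α V P L s - gFlux β γ α V P 0 s) := by
    intro s hs
    have hInt : IntervalIntegrable (fun x => (1/2) * fDen ρ μ β α₁ γ V P x s) volume 0 L :=
      (continuous_const.mul (cFx s)).intervalIntegrable 0 L
    have h := integral_eq_sub_of_hasDerivAt (f := fun y => gFlux β γ α V P y s)
      (f' := fun x => (1/2) * fDen ρ μ β α₁ γ V P x s)
      (fun x hx => hGF s hs x (by rwa [Set.uIcc_of_le hL.le] at hx)) hInt
    rw [intervalIntegral.integral_const_mul] at h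
    linarith
  -- vanishing of the flux at x = 0
  have hT0 : ∀ (W : ℝ → ℝ → ℝ), ContDiff ℝ 2 (fun p : ℝ × ℝ => W p.1 p.2) →
      (∀ s ∈ Set.Icc (0:ℝ) T, W 0 s = 0) →
      ∀ s ∈ Set.Icc (0:ℝ) T, partialT W 0 s = 0 := by
    intro W hW hW0 s hs
    have hcont : Continuous fun σ => partialT W 0 σ :=
      (continuous_partialT hW).comp (continuous_const.prodMk continuous_id)
    have hIoo : Set.EqOn (fun σ => partialT W 0 σ) (fun _ => (0:ℝ)) (Set.Ioo 0 T) := by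
      intro σ hσ
      have hev : (fun τ => W 0 τ) =ᶠ[nhds σ] fun _ => (0:ℝ) :=
        Filter.eventuallyEq_of_mem (Ioo_mem_nhds hσ.1 hσ.2)
          (fun τ hτ => hW0 τ (Set.Ioo_subset_Icc_self hτ))
      show deriv (fun τ => W 0 τ) σ = 0
      rw [hev.deriv_eq]; exact deriv_const σ 0
    have hcl := hIoo.closure hcont continuous_const
    rw [closure_Ioo hT.ne] at hcl
    exact hcl hs
  have hG0 : ∀ s ∈ Set.Icc (0:ℝ) T, gFlux β γ α V P 0 s = 0 := by
    intro s hs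
    unfold gFlux
    rw [hT0 V hV (fun σ hσ => (hbc0 σ hσ).1) s hs, hT0 P hP (fun σ hσ => (hbc0 σ hσ).2) s hs]
    ring
  have hGL : ∀ s ∈ Set.Icc (0:ℝ) T, gFlux β γ α V P L s
      = -(m₁ * partialT V L s * partialTT V L s + m₂ * partialT P L s * partialTT P L s) := by
    intro s hs
    have h1 := hbcV s hs; have h2 := hbcP s hs
    unfold gFlux
    linear_combination (partialT V L s) * h1 + (partialT P L s) * h2
  -- Fubini
  have hswap : (∫ x in (0:ℝ)..L, ∫ s in (0:ℝ)..t', fDen ρ μ β α₁ γ V P x s)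
      = ∫ s in (0:ℝ)..t', ∫ x in (0:ℝ)..L, fDen ρ μ β α₁ γ V P x s := by
    rw [intervalIntegral.integral_of_le hL.le, intervalIntegral.integral_of_le ht0]
    simp_rw [intervalIntegral.integral_of_le ht0, intervalIntegral.integral_of_le hL.le]
    apply MeasureTheory.integral_integral_swap
    rw [Measure.prod_restrict, ← Measure.volume_eq_prod]
    exact ((cF.continuousOn).integrableOn_compact (isCompact_Icc.prod isCompact_Icc)).mono_set
      (Set.prod_mono Set.Ioc_subset_Icc_self Set.Ioc_subset_Icc_self)
  -- the inner spatial integral, rewritten via the boundary conditions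
  have hinner : (∫ s in (0:ℝ)..t', ∫ x in (0:ℝ)..L, fDen ρ μ β α₁ γ V P x s)
      = ∫ s in (0:ℝ)..t',
          -(2 * m₁ * partialT V L s * partialTT V L s
            + 2 * m₂ * partialT P L s * partialTT P L s) := by
    apply intervalIntegral.integral_congr
    intro s hs
    have hsT : s ∈ Set.Icc (0:ℝ) T := by
      rw [hIcc] at hs; exact ⟨hs.1, hs.2.trans htT⟩
    show (∫ x in (0:ℝ)..L, fDen ρ μ β α₁ γ V P x s)
      = -(2 * m₁ * partialT V L s * partialTT V L s
          + 2 * m₂ * partialT P L s * partialTT P L s)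
    rw [hC s hsT, hGL s hsT, hG0 s hsT]; ring
  -- Step D : FTC for the tip terms
  have hD : (∫ s in (0:ℝ)..t',
        -(2 * m₁ * partialT V L s * partialTT V L s
          + 2 * m₂ * partialT P L s * partialTT P L s))
      = -(m₁ * partialT V L t' ^ 2 + m₂ * partialT P L t' ^ 2)
        - -(m₁ * partialT V L 0 ^ 2 + m₂ * partialT P L 0 ^ 2) := by
    apply integral_eq_sub_of_hasDerivAt
      (f := fun s => -(m₁ * partialT V L s ^ 2 + m₂ * partialT P L s ^ 2))
    · intro s _
      have hVt : HasDerivAt (fun σ => partialT V L σ) (partialTT V L s) s := by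
        rw [partialTT_eq hV]; exact hasDerivAt_partialT_T hV L s
      have hPt : HasDerivAt (fun σ => partialT P L σ) (partialTT P L s) s := by
        rw [partialTT_eq hP]; exact hasDerivAt_partialT_T hP L s
      refine (((hVt.pow 2).const_mul m₁).add ((hPt.pow 2).const_mul m₂)).neg.congr_deriv ?_
      ring
    · apply Continuous.intervalIntegrable
      have cVt : Continuous fun s : ℝ => partialT V L s :=
        (continuous_partialT hV).comp (continuous_const.prodMk continuous_id)
      have cPt : Continuous fun s : ℝ => partialT P L s :=
        (continuous_partialT hP).comp (continuous_const.prodMk continuous_id)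
      have cVtt : Continuous fun s : ℝ => partialTT V L s :=
        (continuous_partialTT hV).comp (continuous_const.prodMk continuous_id)
      have cPtt : Continuous fun s : ℝ => partialTT P L s :=
        (continuous_partialTT hP).comp (continuous_const.prodMk continuous_id)
      exact ((((continuous_const.mul cVt).mul cVtt).add
        ((continuous_const.mul cPt).mul cPtt)).neg)
  -- subtract the energies
  have hsub : (∫ x in (0:ℝ)..L, eDen ρ μ β α₁ γ V P x t')
      - (∫ x in (0:ℝ)..L, eDen ρ μ β α₁ γ V P x 0)
      = ∫ x in (0:ℝ)..L, ∫ s in (0:ℝ)..t', fDen ρ μ β α₁ γ V P x s := by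
    rw [← intervalIntegral.integral_sub ((cEx t').intervalIntegrable 0 L)
      ((cEx 0).intervalIntegrable 0 L)]
    apply intervalIntegral.integral_congr
    intro x _
    exact (hA x).symm
  have key := hsub.trans (hswap.trans (hinner.trans hD))
  have hEt : ∀ τ : ℝ, energy ρ μ β m₁ m₂ α₁ γ L V P τ
      = (1/2) * (∫ x in (0:ℝ)..L, eDen ρ μ β α₁ γ V P x τ)
        + m₁/2 * partialT V L τ ^ 2 + m₂/2 * partialT P L τ ^ 2 := fun τ => rfl
  rw [hEt t', hEt 0]
  nlinarith [key]
end

section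
/- Dissipativity identity (classical form of Lemma 2.1): Let V, P be complex-valued C² functions and Φ, Θ complex-valued C¹ functions on [0,L] with V(0) = P(0) = Φ(0) = Θ(0) = 0, and set u = Φ(L), η = Θ(L). Then Re{ ∫₀ᴸ [ (αV″ − γβP″)·conj(Φ) + (βP″ − γβV″)·conj(Θ) + α₁Φ′·conj(V′) + β(γΦ′ − Θ′)·conj(γV′ − P′) ] dx + (−αV′(L) + γβP′(L) − ξ₁u)·conj(u) + (−βP′(L) + γβV′(L) − ξ₂η)·conj(η) } = −ξ₁|u|² − ξ₂|η|². -/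
/-!
Put `F₁ = αV′ − γβP′` and `F₂ = βP′ − γβV′`. The first two terms of the integrand are
`F₁′ Φ̄ + F₂′ Θ̄`, and the energy terms `α₁Φ′V̄′ + β(γΦ′ − Θ′)(γV̄′ − P̄′)` are the complex
conjugate of `F₁ Φ̄′ + F₂ Θ̄′` (this is where `α = α₁ + γ²β` enters), so they have the same
real part. Hence the real part of the integrand is that of `(F₁ Φ̄ + F₂ Θ̄)′`, the integral
reduces to the boundary value `F₁(L) ū + F₂(L) η̄` (the value at `0` vanishes since
`Φ(0) = Θ(0) = 0`), and this cancels against the tip terms up to `−ξ₁|u|² − ξ₂|η|²`.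
-/

open Complex

open scoped ComplexConjugate

theorem HasDerivAt.mul_conj {F Ψ : ℝ → ℂ} {F' Ψ' : ℂ} {x : ℝ}
    (hF : HasDerivAt F F' x) (hΨ : HasDerivAt Ψ Ψ' x) :
    HasDerivAt (fun y => F y * conj (Ψ y)) (F' * conj (Ψ x) + F x * conj Ψ') x :=
  hF.mul hΨ.star

theorem re_intervalIntegral_congr {f g : ℝ → ℂ} {a b : ℝ} {μ : MeasureTheory.Measure ℝ}
    (hf : IntervalIntegrable f μ a b) (hg : IntervalIntegrable g μ a b)
    (h : ∀ x ∈ Set.uIcc a b, (f x).re = (g x).re) :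
    (∫ x in a..b, f x ∂μ).re = (∫ x in a..b, g x ∂μ).re :=
  calc (∫ x in a..b, f x ∂μ).re = ∫ x in a..b, (f x).re ∂μ :=
        (intervalIntegral.intervalIntegral_re hf).symm
    _ = ∫ x in a..b, (g x).re ∂μ := intervalIntegral.integral_congr h
    _ = (∫ x in a..b, g x ∂μ).re := intervalIntegral.intervalIntegral_re hg

def piezoEnergyForm (α₁ β γ : ℝ) (φ θ v p : ℂ) : ℂ :=
  α₁ * φ * conj v + β * (γ * φ - θ) * conj (γ * v - p)

theorem piezoEnergyForm_swap (α₁ β γ : ℝ) (φ θ v p : ℂ) :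
    piezoEnergyForm α₁ β γ φ θ v p = conj (piezoEnergyForm α₁ β γ v p φ θ) := by
  simp only [piezoEnergyForm, map_add, map_mul, map_sub, conj_ofReal, conj_conj]
  ring

theorem re_piezoEnergyForm {α₁ β γ α : ℝ} (hα : α = α₁ + γ ^ 2 * β) (φ θ v p : ℂ) :
    (piezoEnergyForm α₁ β γ φ θ v p).re =
      ((α * v - γ * β * p) * conj φ + (β * p - γ * β * v) * conj θ).re := by
  rw [piezoEnergyForm_swap, conj_re, hα]
  congr 1
  simp only [piezoEnergyForm, map_sub, map_mul, conj_ofReal]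
  push_cast
  ring

theorem re_intervalIntegral_piezo_eq_boundary {β γ α₁ α : ℝ} (hα : α = α₁ + γ ^ 2 * β)
    {V P Φ Θ : ℝ → ℂ} (hV : ContDiff ℝ 2 V) (hP : ContDiff ℝ 2 P)
    (hΦ : ContDiff ℝ 1 Φ) (hΘ : ContDiff ℝ 1 Θ) (a b : ℝ) :
    (∫ x in a..b,
        ((α * deriv (deriv V) x - γ * β * deriv (deriv P) x) * conj (Φ x)
          + (β * deriv (deriv P) x - γ * β * deriv (deriv V) x) * conj (Θ x)
          + α₁ * deriv Φ x * conj (deriv V x)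
          + β * (γ * deriv Φ x - deriv Θ x) * conj (γ * deriv V x - deriv P x))).re
      = ((α * deriv V b - γ * β * deriv P b) * conj (Φ b)
          + (β * deriv P b - γ * β * deriv V b) * conj (Θ b)
        - ((α * deriv V a - γ * β * deriv P a) * conj (Φ a)
          + (β * deriv P a - γ * β * deriv V a) * conj (Θ a))).re := by
  have hV' : ContDiff ℝ 1 (deriv V) := hV.deriv'
  have hP' : ContDiff ℝ 1 (deriv P) := hP.deriv'
  have := hV'.continuous_deriv le_rfl
  have := hP'.continuous_deriv le_rfl
  have := hΦ.continuous_deriv le_rfl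
  have := hΘ.continuous_deriv le_rfl
  set g : ℝ → ℂ := fun x =>
    (α * deriv (deriv V) x - γ * β * deriv (deriv P) x) * conj (Φ x)
      + (α * deriv V x - γ * β * deriv P x) * conj (deriv Φ x)
      + ((β * deriv (deriv P) x - γ * β * deriv (deriv V) x) * conj (Θ x)
        + (β * deriv P x - γ * β * deriv V x) * conj (deriv Θ x))
  have hG (x : ℝ) : HasDerivAt (fun y => (α * deriv V y - γ * β * deriv P y) * conj (Φ y)
      + (β * deriv P y - γ * β * deriv V y) * conj (Θ y)) (g x) x := by
    have hV'' := (hV'.differentiable one_ne_zero x).hasDerivAt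
    have hP'' := (hP'.differentiable one_ne_zero x).hasDerivAt
    exact (((hV''.const_mul _).sub (hP''.const_mul _)).mul_conj
        (hΦ.differentiable one_ne_zero x).hasDerivAt).add
      (((hP''.const_mul _).sub (hV''.const_mul _)).mul_conj
        (hΘ.differentiable one_ne_zero x).hasDerivAt)
  rw [re_intervalIntegral_congr (g := g) (Continuous.intervalIntegrable (by fun_prop) _ _)
      (Continuous.intervalIntegrable (by fun_prop) _ _),
    intervalIntegral.integral_eq_sub_of_hasDerivAt (fun x _ => hG x)
      (Continuous.intervalIntegrable (by fun_prop) _ _)]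
  intro x _
  have := re_piezoEnergyForm hα (deriv Φ x) (deriv Θ x) (deriv V x) (deriv P x)
  simp only [piezoEnergyForm, g, add_re] at this ⊢
  linarith

theorem dissipativity_identity_general
    (β ξ₁ ξ₂ L γ α₁ α : ℝ)
    (hα : α = α₁ + γ ^ 2 * β)
    (V P Φ Θ : ℝ → ℂ)
    (hV : ContDiff ℝ 2 V) (hP : ContDiff ℝ 2 P)
    (hΦ : ContDiff ℝ 1 Φ) (hΘ : ContDiff ℝ 1 Θ)
    (hΦ0 : Φ 0 = 0) (hΘ0 : Θ 0 = 0)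
    (u η : ℂ) (hu : u = Φ L) (hη : η = Θ L) :
    ((∫ x in (0:ℝ)..L,
        (((α : ℂ) * deriv (deriv V) x - (γ : ℂ) * (β : ℂ) * deriv (deriv P) x)
            * starRingEnd ℂ (Φ x)
          + ((β : ℂ) * deriv (deriv P) x - (γ : ℂ) * (β : ℂ) * deriv (deriv V) x)
            * starRingEnd ℂ (Θ x)
          + (α₁ : ℂ) * deriv Φ x * starRingEnd ℂ (deriv V x)
          + (β : ℂ) * ((γ : ℂ) * deriv Φ x - deriv Θ x)
            * starRingEnd ℂ ((γ : ℂ) * deriv V x - deriv P x)))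
      + (-(α : ℂ) * deriv V L + (γ : ℂ) * (β : ℂ) * deriv P L - (ξ₁ : ℂ) * u)
          * starRingEnd ℂ u
      + (-(β : ℂ) * deriv P L + (γ : ℂ) * (β : ℂ) * deriv V L - (ξ₂ : ℂ) * η)
          * starRingEnd ℂ η).re
    = -(ξ₁ * ‖u‖ ^ 2) - ξ₂ * ‖η‖ ^ 2 := by
  rw [add_re, add_re, re_intervalIntegral_piezo_eq_boundary hα hV hP hΦ hΘ, hΦ0, hΘ0, ← hu, ← hη,
    map_zero, mul_zero, mul_zero, add_zero, sub_zero, ← add_re, ← add_re]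
  have hbdry : (α * deriv V L - γ * β * deriv P L) * conj u
      + (β * deriv P L - γ * β * deriv V L) * conj η
      + (-α * deriv V L + γ * β * deriv P L - ξ₁ * u) * conj u
      + (-β * deriv P L + γ * β * deriv V L - ξ₂ * η) * conj η
      = -ξ₁ * (u * conj u) - ξ₂ * (η * conj η) := by
    ring
  rw [hbdry, mul_conj, mul_conj, normSq_eq_norm_sq, normSq_eq_norm_sq]
  simp only [sub_re, neg_mul, neg_re, re_ofReal_mul, ofReal_re]

/-- Dissipativity identity (classical form of Lemma 2.1): the real part of the
weighted inner product `⟨AU, U⟩` equals `−ξ₁|u|² − ξ₂|η|²`. -/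
theorem dissipativity_identity
    (ρ μ β m₁ m₂ ξ₁ ξ₂ L γ α₁ α : ℝ)
    (hρ : 0 < ρ) (hμ : 0 < μ) (hβ : 0 < β) (hm₁ : 0 < m₁) (hm₂ : 0 < m₂)
    (hξ₁ : 0 < ξ₁) (hξ₂ : 0 < ξ₂) (hL : 0 < L) (hα₁ : 0 < α₁)
    (hα : α = α₁ + γ ^ 2 * β)
    (V P Φ Θ : ℝ → ℂ)
    (hV : ContDiff ℝ 2 V) (hP : ContDiff ℝ 2 P)
    (hΦ : ContDiff ℝ 1 Φ) (hΘ : ContDiff ℝ 1 Θ)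
    (hV0 : V 0 = 0) (hP0 : P 0 = 0) (hΦ0 : Φ 0 = 0) (hΘ0 : Θ 0 = 0)
    (u η : ℂ) (hu : u = Φ L) (hη : η = Θ L) :
    ((∫ x in (0:ℝ)..L,
        (((α : ℂ) * deriv (deriv V) x - (γ : ℂ) * (β : ℂ) * deriv (deriv P) x)
            * starRingEnd ℂ (Φ x)
          + ((β : ℂ) * deriv (deriv P) x - (γ : ℂ) * (β : ℂ) * deriv (deriv V) x)
            * starRingEnd ℂ (Θ x)
          + (α₁ : ℂ) * deriv Φ x * starRingEnd ℂ (deriv V x)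
          + (β : ℂ) * ((γ : ℂ) * deriv Φ x - deriv Θ x)
            * starRingEnd ℂ ((γ : ℂ) * deriv V x - deriv P x)))
      + (-(α : ℂ) * deriv V L + (γ : ℂ) * (β : ℂ) * deriv P L - (ξ₁ : ℂ) * u)
          * starRingEnd ℂ u
      + (-(β : ℂ) * deriv P L + (γ : ℂ) * (β : ℂ) * deriv V L - (ξ₂ : ℂ) * η)
          * starRingEnd ℂ η).re
    = -(ξ₁ * ‖u‖ ^ 2) - ξ₂ * ‖η‖ ^ 2 :=
  dissipativity_identity_general β ξ₁ ξ₂ L γ α₁ α hα V P Φ Θ hV hP hΦ hΘ hΦ0 hΘ0 u η hu hη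
end

section
/- Resolvent multiplier identity (Lemma 3.3/Lemma 4.3): Given resolvent data and a real-valued C¹ function q on [0,L] with q(0) = 0, set I_V = q(L)·(ρ|Φ(L)|² + α₁|V′(L)|²), I_P = q(L)·(μ|Θ(L)|² + β|γV′(L) − P′(L)|²), R₁ = Re ∫₀ᴸ 2μ·q·( f₄·conj(P′) + conj(f₃′)·Θ ) dx, and R₂ = Re ∫₀ᴸ 2ρ·q·( f₂·conj(V′) + Φ·conj(f₁′) ) dx. Then I_V + I_P − ∫₀ᴸ q′·( ρ|Φ|² + μ|Θ|² + α₁|V′|² + β|γV′ − P′|² ) dx = −R₁ − R₂. -/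
open Complex

/-- Resolvent data for the damped piezoelectric beam system with magnetic effect and
tip body: solutions of the resolvent (spectral) equation `iλU − AU = F` written in
components, together with the boundary conditions. -/
structure ResolventData (ρ μ β m₁ m₂ ξ₁ ξ₂ γ α₁ α L lam : ℝ) where
  V : ℝ → ℂ
  P : ℝ → ℂ
  Φ : ℝ → ℂ
  Θ : ℝ → ℂ
  f₁ : ℝ → ℂ
  f₂ : ℝ → ℂ
  f₃ : ℝ → ℂ
  f₄ : ℝ → ℂ
  u : ℂ
  η : ℂ
  f₅ : ℂ
  f₆ : ℂ
  hV : ContDiff ℝ 2 V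
  hP : ContDiff ℝ 2 P
  hΦ : ContDiff ℝ 1 Φ
  hΘ : ContDiff ℝ 1 Θ
  hf₁ : ContDiff ℝ 1 f₁
  hf₃ : ContDiff ℝ 1 f₃
  hf₂ : Continuous f₂
  hf₄ : Continuous f₄
  eq1 : ∀ x ∈ Set.Icc (0:ℝ) L, Complex.I * (lam : ℂ) * V x - Φ x = f₁ x
  eq2 : ∀ x ∈ Set.Icc (0:ℝ) L,
    Complex.I * (lam : ℂ) * (ρ : ℂ) * Φ x - (α : ℂ) * deriv (deriv V) x
      + (γ : ℂ) * (β : ℂ) * deriv (deriv P) x = (ρ : ℂ) * f₂ x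
  eq3 : ∀ x ∈ Set.Icc (0:ℝ) L, Complex.I * (lam : ℂ) * P x - Θ x = f₃ x
  eq4 : ∀ x ∈ Set.Icc (0:ℝ) L,
    Complex.I * (lam : ℂ) * (μ : ℂ) * Θ x - (β : ℂ) * deriv (deriv P) x
      + (γ : ℂ) * (β : ℂ) * deriv (deriv V) x = (μ : ℂ) * f₄ x
  bV0 : V 0 = 0
  bP0 : P 0 = 0
  bΦ0 : Φ 0 = 0
  bΘ0 : Θ 0 = 0
  bΦL : Φ L = u
  bΘL : Θ L = η
  bu : (Complex.I * (lam : ℂ) * (m₁ : ℂ) + (ξ₁ : ℂ)) * u + (α : ℂ) * deriv V L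
      - (γ : ℂ) * (β : ℂ) * deriv P L = (m₁ : ℂ) * f₅
  bη : (Complex.I * (lam : ℂ) * (m₂ : ℂ) + (ξ₂ : ℂ)) * η + (β : ℂ) * deriv P L
      - (γ : ℂ) * (β : ℂ) * deriv V L = (m₂ : ℂ) * f₆

variable {ρ μ β m₁ m₂ ξ₁ ξ₂ γ α₁ α L lam : ℝ}

/-- The squared interior norm `N²` of the resolvent data. -/
noncomputable def Nsq (D : ResolventData ρ μ β m₁ m₂ ξ₁ ξ₂ γ α₁ α L lam) : ℝ :=
  ∫ x in (0:ℝ)..L,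
    (ρ * ‖D.Φ x‖ ^ 2 + μ * ‖D.Θ x‖ ^ 2
      + α₁ * ‖deriv D.V x‖ ^ 2
      + β * ‖(γ : ℂ) * deriv D.V x - deriv D.P x‖ ^ 2)

/-- The squared state-space norm `‖U‖²` of the resolvent data. -/
noncomputable def Usq (D : ResolventData ρ μ β m₁ m₂ ξ₁ ξ₂ γ α₁ α L lam) : ℝ :=
  Nsq D + m₁ * ‖D.u‖ ^ 2 + m₂ * ‖D.η‖ ^ 2

/-- The squared state-space norm `‖F‖²` of the right-hand side of the resolvent
equation. -/
noncomputable def Fsq (D : ResolventData ρ μ β m₁ m₂ ξ₁ ξ₂ γ α₁ α L lam) : ℝ :=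
  (∫ x in (0:ℝ)..L,
      (ρ * ‖D.f₂ x‖ ^ 2 + μ * ‖D.f₄ x‖ ^ 2
        + α₁ * ‖deriv D.f₁ x‖ ^ 2
        + β * ‖(γ : ℂ) * deriv D.f₁ x - deriv D.f₃ x‖ ^ 2))
    + m₁ * ‖D.f₅‖ ^ 2 + m₂ * ‖D.f₆‖ ^ 2

/-! Let `E` be the energy density `ρ|Φ|² + μ|Θ|² + α₁|V′|² + β|γV′ − P′|²`. Integrating
`(qE)′ = q′E + qE′` over `[0, L]` with `q(0) = 0` reduces the claim to a pointwise identity for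
`qE′`. There, substituting `Φ′ = iλV′ − f₁′`, `Θ′ = iλP′ − f₃′` and eliminating `V″`, `P″` by
the second and fourth equations, the `iλ` terms cancel in pairs and `α = α₁ + γ²β` recombines
the elastic terms. -/

open Set intervalIntegral ComplexConjugate

theorem eqOn_deriv_Icc_of_eqOn_Icc {E : Type*} [NormedAddCommGroup E] [NormedSpace ℝ E]
    {f g : ℝ → E} {a b : ℝ} (hab : a < b) (hf : Continuous (deriv f))
    (hg : Continuous (deriv g)) (hfg : EqOn f g (Icc a b)) :
    EqOn (deriv f) (deriv g) (Icc a b) := by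
  have := ((hfg.mono Ioo_subset_Icc_self).deriv isOpen_Ioo).closure hf hg
  rwa [closure_Ioo hab.ne] at this

theorem eqOn_deriv_Icc_of_const_mul_sub {f v w : ℝ → ℂ} {a b : ℝ} (c : ℂ) (hab : a < b)
    (hf : ContDiff ℝ 1 f) (hv : ContDiff ℝ 1 v) (hw : ContDiff ℝ 1 w)
    (h : ∀ x ∈ Icc a b, c * v x - w x = f x) :
    EqOn (deriv f) (fun x => c * deriv v x - deriv w x) (Icc a b) := by
  have hderiv : deriv (fun x => c * v x - w x) = fun x => c * deriv v x - deriv w x :=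
    funext fun x => (((hv.differentiable one_ne_zero x).hasDerivAt.const_mul c).sub
      (hw.differentiable one_ne_zero x).hasDerivAt).deriv
  have := hv.continuous_deriv le_rfl
  have := hw.continuous_deriv le_rfl
  rw [← hderiv]
  exact eqOn_deriv_Icc_of_eqOn_Icc hab (hf.continuous_deriv le_rfl) (by rw [hderiv]; fun_prop)
    fun x hx => (h x hx).symm

theorem energy_rate_eq_of_resolvent {ρ μ β γ α₁ α lam : ℝ} (hα : α = α₁ + γ ^ 2 * β)
    {Φ Φ' Θ Θ' V' V'' P' P'' f₁' f₂ f₃' f₄ : ℂ}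
    (h₁ : f₁' = I * lam * V' - Φ') (h₃ : f₃' = I * lam * P' - Θ')
    (h₂ : I * lam * ρ * Φ - α * V'' + γ * β * P'' = ρ * f₂)
    (h₄ : I * lam * μ * Θ - β * P'' + γ * β * V'' = μ * f₄) :
    2 * (ρ * inner ℝ Φ Φ' + μ * inner ℝ Θ Θ' + α₁ * inner ℝ V' V''
        + β * inner ℝ ((γ : ℂ) * V' - P') ((γ : ℂ) * V'' - P''))
      = -(2 * μ * (f₄ * conj P' + conj f₃' * Θ)).re
        - (2 * ρ * (f₂ * conj V' + Φ * conj f₁')).re := by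
  subst h₁ h₃
  have hαC : (α : ℂ) = α₁ + γ ^ 2 * β := by exact_mod_cast congrArg ofReal hα
  -- With the inner products oriented this way the identity holds before taking real parts.
  have key : 2 * (ρ * (Φ * conj Φ') + μ * (Θ * conj Θ') + α₁ * (V'' * conj V')
        + β * ((γ * V'' - P'') * conj (γ * V' - P')))
      + 2 * μ * (f₄ * conj P' + conj (I * lam * P' - Θ') * Θ)
      + 2 * ρ * (f₂ * conj V' + Φ * conj (I * lam * V' - Φ')) = 0 := by
    simp only [map_sub, map_mul, conj_I, conj_ofReal]
    linear_combination (-2 * conj P') * h₄ + (-2 * conj V') * h₂ - (2 * V'' * conj V') * hαC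
  rw [real_inner_comm Φ', real_inner_comm Θ']
  have := congrArg re key
  simp only [Complex.inner, add_re, mul_re, ofReal_re, ofReal_im, re_ofNat, im_ofNat,
    zero_re] at this ⊢
  linarith

namespace ResolventData

variable (D : ResolventData ρ μ β m₁ m₂ ξ₁ ξ₂ γ α₁ α L lam)

theorem contDiff_deriv_V : ContDiff ℝ 1 (deriv D.V) := D.hV.deriv'

theorem contDiff_deriv_P : ContDiff ℝ 1 (deriv D.P) := D.hP.deriv'

noncomputable def energyDensity (x : ℝ) : ℝ :=
  ρ * ‖D.Φ x‖ ^ 2 + μ * ‖D.Θ x‖ ^ 2 + α₁ * ‖deriv D.V x‖ ^ 2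
    + β * ‖(γ : ℂ) * deriv D.V x - deriv D.P x‖ ^ 2

noncomputable def energyDensityDeriv (x : ℝ) : ℝ :=
  2 * (ρ * inner ℝ (D.Φ x) (deriv D.Φ x) + μ * inner ℝ (D.Θ x) (deriv D.Θ x)
    + α₁ * inner ℝ (deriv D.V x) (deriv (deriv D.V) x)
    + β * inner ℝ ((γ : ℂ) * deriv D.V x - deriv D.P x)
        ((γ : ℂ) * deriv (deriv D.V) x - deriv (deriv D.P) x))

theorem hasDerivAt_energyDensity (x : ℝ) :
    HasDerivAt D.energyDensity (D.energyDensityDeriv x) x := by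
  have hΦ := (D.hΦ.differentiable one_ne_zero x).hasDerivAt
  have hΘ := (D.hΘ.differentiable one_ne_zero x).hasDerivAt
  have hV' := (D.contDiff_deriv_V.differentiable one_ne_zero x).hasDerivAt
  have hP' := (D.contDiff_deriv_P.differentiable one_ne_zero x).hasDerivAt
  refine ((((hΦ.norm_sq.const_mul ρ).add (hΘ.norm_sq.const_mul μ)).add
    (hV'.norm_sq.const_mul α₁)).add
      (((hV'.const_mul (γ : ℂ)).sub hP').norm_sq.const_mul β)).congr_deriv ?_
  simp only [energyDensityDeriv, Pi.sub_apply]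
  ring

theorem continuous_energyDensityDeriv : Continuous D.energyDensityDeriv := by
  have := D.hΦ.continuous
  have := D.hΘ.continuous
  have := D.hΦ.continuous_deriv le_rfl
  have := D.hΘ.continuous_deriv le_rfl
  have := D.contDiff_deriv_V.continuous
  have := D.contDiff_deriv_P.continuous
  have := D.contDiff_deriv_V.continuous_deriv le_rfl
  have := D.contDiff_deriv_P.continuous_deriv le_rfl
  unfold energyDensityDeriv
  fun_prop

theorem mul_energyDensityDeriv_eq (hα : α = α₁ + γ ^ 2 * β) (hL : 0 < L) (r : ℝ) {x : ℝ}
    (hx : x ∈ Icc 0 L) :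
    r * D.energyDensityDeriv x
      = -(2 * μ * r * (D.f₄ x * conj (deriv D.P x) + conj (deriv D.f₃ x) * D.Θ x)).re
        - (2 * ρ * r * (D.f₂ x * conj (deriv D.V x) + D.Φ x * conj (deriv D.f₁ x))).re := by
  have hf₁ := eqOn_deriv_Icc_of_const_mul_sub _ hL D.hf₁ (D.hV.of_le one_le_two) D.hΦ D.eq1 hx
  have hf₃ := eqOn_deriv_Icc_of_const_mul_sub _ hL D.hf₃ (D.hP.of_le one_le_two) D.hΘ D.eq3 hx
  rw [energyDensityDeriv, energy_rate_eq_of_resolvent hα hf₁ hf₃ (D.eq2 x hx) (D.eq4 x hx)]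
  simp only [mul_re, mul_im, ofReal_re, ofReal_im, re_ofNat, im_ofNat, mul_zero, zero_mul,
    add_zero, sub_zero]
  ring

theorem integral_neg_re_sub_re {q : ℝ → ℝ} (hq : Continuous q) {a b : ℝ} :
    ∫ x in a..b, (-(2 * μ * q x * (D.f₄ x * conj (deriv D.P x) + conj (deriv D.f₃ x) * D.Θ x)).re
        - (2 * ρ * q x * (D.f₂ x * conj (deriv D.V x) + D.Φ x * conj (deriv D.f₁ x))).re)
      = -(∫ x in a..b, 2 * μ * q x * (D.f₄ x * conj (deriv D.P x)
            + conj (deriv D.f₃ x) * D.Θ x)).re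
        - (∫ x in a..b, 2 * ρ * q x * (D.f₂ x * conj (deriv D.V x)
            + D.Φ x * conj (deriv D.f₁ x))).re := by
  have := D.contDiff_deriv_V.continuous
  have := D.contDiff_deriv_P.continuous
  have := D.hf₁.continuous_deriv le_rfl
  have := D.hf₃.continuous_deriv le_rfl
  have := D.hΦ.continuous
  have := D.hΘ.continuous
  have := D.hf₂
  have := D.hf₄
  simp only [← RCLike.re_to_complex]
  rw [integral_sub, integral_neg, intervalIntegral_re, intervalIntegral_re]
  all_goals exact Continuous.intervalIntegrable (by fun_prop) _ _

end ResolventData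

theorem resolvent_multiplier_identity_general
    (ρ μ β m₁ m₂ ξ₁ ξ₂ γ α₁ α L lam : ℝ)
    (hL : 0 < L)
    (hα : α = α₁ + γ ^ 2 * β)
    (q : ℝ → ℝ) (hq : ContDiff ℝ 1 q) (hq0 : q 0 = 0)
    (D : ResolventData ρ μ β m₁ m₂ ξ₁ ξ₂ γ α₁ α L lam) :
    q L * (ρ * ‖D.Φ L‖ ^ 2 + α₁ * ‖deriv D.V L‖ ^ 2)
      + q L * (μ * ‖D.Θ L‖ ^ 2
          + β * ‖(γ : ℂ) * deriv D.V L - deriv D.P L‖ ^ 2)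
      - (∫ x in (0:ℝ)..L,
          deriv q x * (ρ * ‖D.Φ x‖ ^ 2 + μ * ‖D.Θ x‖ ^ 2
            + α₁ * ‖deriv D.V x‖ ^ 2
            + β * ‖(γ : ℂ) * deriv D.V x - deriv D.P x‖ ^ 2))
    = -(∫ x in (0:ℝ)..L,
          (2 * (μ : ℂ) * (q x : ℂ) * (D.f₄ x * starRingEnd ℂ (deriv D.P x)
            + starRingEnd ℂ (deriv D.f₃ x) * D.Θ x))).re
      - (∫ x in (0:ℝ)..L,
          (2 * (ρ : ℂ) * (q x : ℂ) * (D.f₂ x * starRingEnd ℂ (deriv D.V x)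
            + D.Φ x * starRingEnd ℂ (deriv D.f₁ x)))).re := by
  have hparts := integral_mul_deriv_eq_deriv_mul
    (fun x _ => (hq.differentiable one_ne_zero x).hasDerivAt)
    (fun x _ => D.hasDerivAt_energyDensity x)
    ((hq.continuous_deriv le_rfl).intervalIntegrable 0 L)
    (D.continuous_energyDensityDeriv.intervalIntegrable 0 L)
  rw [integral_congr fun x hx => D.mul_energyDensityDeriv_eq hα hL (q x)
      (by rwa [uIcc_of_le hL.le] at hx),
    D.integral_neg_re_sub_re hq.continuous, hq0, zero_mul, sub_zero] at hparts
  simp only [ResolventData.energyDensity] at hparts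
  linarith

/-- Resolvent multiplier identity (Lemma 4.3): for any `C¹` multiplier `q` with
`q(0) = 0`, the boundary terms `I_V + I_P` minus the `q′`-weighted interior energy
equal `−R₁ − R₂`. -/
theorem resolvent_multiplier_identity
    (ρ μ β m₁ m₂ ξ₁ ξ₂ γ α₁ α L lam : ℝ)
    (hρ : 0 < ρ) (hμ : 0 < μ) (hβ : 0 < β) (hm₁ : 0 < m₁) (hm₂ : 0 < m₂)
    (hξ₁ : 0 < ξ₁) (hξ₂ : 0 < ξ₂) (hL : 0 < L) (hα₁ : 0 < α₁)
    (hα : α = α₁ + γ ^ 2 * β)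
    (q : ℝ → ℝ) (hq : ContDiff ℝ 1 q) (hq0 : q 0 = 0)
    (D : ResolventData ρ μ β m₁ m₂ ξ₁ ξ₂ γ α₁ α L lam) :
    q L * (ρ * ‖D.Φ L‖ ^ 2 + α₁ * ‖deriv D.V L‖ ^ 2)
      + q L * (μ * ‖D.Θ L‖ ^ 2
          + β * ‖(γ : ℂ) * deriv D.V L - deriv D.P L‖ ^ 2)
      - (∫ x in (0:ℝ)..L,
          deriv q x * (ρ * ‖D.Φ x‖ ^ 2 + μ * ‖D.Θ x‖ ^ 2
            + α₁ * ‖deriv D.V x‖ ^ 2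
            + β * ‖(γ : ℂ) * deriv D.V x - deriv D.P x‖ ^ 2))
    = -(∫ x in (0:ℝ)..L,
          (2 * (μ : ℂ) * (q x : ℂ) * (D.f₄ x * starRingEnd ℂ (deriv D.P x)
            + starRingEnd ℂ (deriv D.f₃ x) * D.Θ x))).re
      - (∫ x in (0:ℝ)..L,
          (2 * (ρ : ℂ) * (q x : ℂ) * (D.f₂ x * starRingEnd ℂ (deriv D.V x)
            + D.Φ x * starRingEnd ℂ (deriv D.f₁ x)))).re :=
  resolvent_multiplier_identity_general ρ μ β m₁ m₂ ξ₁ ξ₂ γ α₁ α L lam hL hα q hq hq0 D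
end
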